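/- arXiv:1601.05884 — 10 statements merged into one kernel-verified Lean document; each statement's English description precedes it below -/
import Mathlib

section
/- (Shanin / Δ-system lemma) Let κ be an uncountable regular cardinal and (T_γ : γ ∈ Γ) a family of finite sets with |Γ| = κ. Then there exist Δ ⊆ Γ with |Δ| = κ and a finite set S such that T_β ∩ T_γ = S for all distinct β, γ ∈ Δ. -/
/-!
Pigeonhole first makes all the sets of one size `n`; then induct on `n`. If some point lies in
`κ` of the sets, remove it from them and add it back to the root of the Δ-system found for the
smaller sets. Otherwise every point lies in fewer than `κ` of the sets, and a maximal pairwise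
disjoint subfamily has size `κ`: the `< κ` sets of a smaller one cover `< κ` points, which meet
only `< κ` members of the family, so some member is disjoint from all of them.
-/

open Cardinal Set

universe u

variable {α ι : Type u} {κ : Cardinal.{u}}

theorem Cardinal.exists_mem_notMem_of_mk_lt {s t : Set ι} (ht : #t < κ) (hs : κ ≤ #s) :
    ∃ γ ∈ s, γ ∉ t := by
  by_contra! h
  exact (mk_le_mk_of_subset h).not_gt (ht.trans_le hs)

theorem Cardinal.mk_iUnion_finset_lt (hreg : κ.IsRegular) (hunc : ℵ₀ < κ) {Δ : Set ι}
    (T : ι → Finset α) (hΔ : #Δ < κ) : #(⋃ β : Δ, (T β : Set α)) < κ :=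
  (card_iUnion_lt_iff_forall_of_isRegular hreg hΔ).2 fun β =>
    (finset_card_lt_aleph0 (T β)).trans hunc

theorem exists_disjoint_of_forall_mk_lt (hreg : κ.IsRegular) (hunc : ℵ₀ < κ)
    (T : ι → Finset α) {s Δ : Set ι} (hs : κ ≤ #s) (hT : ∀ a, #{γ ∈ s | a ∈ T γ} < κ)
    (hΔ : #Δ < κ) : ∃ γ ∈ s, γ ∉ Δ ∧ ∀ β ∈ Δ, Disjoint (T γ) (T β) := by
  set X := ⋃ β : Δ, (T β : Set α)
  set meetsX := ⋃ a : X, {γ ∈ s | a.1 ∈ T γ}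
  have hmeetsX : #meetsX < κ :=
    (card_iUnion_lt_iff_forall_of_isRegular hreg (mk_iUnion_finset_lt hreg hunc T hΔ)).2
      fun a => hT a
  have hbad : #(Δ ∪ meetsX : Set ι) < κ :=
    (mk_union_le _ _).trans_lt (add_lt_of_lt hreg.aleph0_le hΔ hmeetsX)
  obtain ⟨γ, hγs, hγ⟩ := exists_mem_notMem_of_mk_lt hbad hs
  rw [mem_union, not_or] at hγ
  refine ⟨γ, hγs, hγ.1, fun β hβ => Finset.disjoint_left.2 fun a haγ haβ => hγ.2 ?_⟩
  exact mem_iUnion.2 ⟨⟨a, mem_iUnion.2 ⟨⟨β, hβ⟩, haβ⟩⟩, hγs, haγ⟩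

theorem exists_pairwiseDisjoint_of_forall_mk_lt (hreg : κ.IsRegular) (hunc : ℵ₀ < κ)
    (T : ι → Finset α) {s : Set ι} (hs : κ ≤ #s) (hT : ∀ a, #{γ ∈ s | a ∈ T γ} < κ) :
    ∃ Δ ⊆ s, κ ≤ #Δ ∧ Δ.PairwiseDisjoint T := by
  obtain ⟨Δ, hmax⟩ := zorn_subset {Δ | Δ ⊆ s ∧ Δ.PairwiseDisjoint T} fun c hc hchain =>
    ⟨⋃₀ c, ⟨sUnion_subset fun Δ hΔ => (hc hΔ).1,
      (hchain.pairwiseDisjoint_sUnion T).2 fun Δ hΔ => (hc hΔ).2⟩,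
      fun _ => subset_sUnion_of_mem⟩
  refine ⟨Δ, hmax.prop.1, not_lt.1 fun hΔ => ?_, hmax.prop.2⟩
  obtain ⟨γ, hγs, hγΔ, hdisj⟩ := exists_disjoint_of_forall_mk_lt hreg hunc T hs hT hΔ
  have hinsert : insert γ Δ ∈ {Δ | Δ ⊆ s ∧ Δ.PairwiseDisjoint T} :=
    ⟨insert_subset hγs hmax.prop.1, hmax.prop.2.insert fun β hβ _ => hdisj β hβ⟩
  exact hγΔ (hmax.eq_of_ge hinsert (subset_insert γ Δ) ▸ mem_insert γ Δ)

variable [DecidableEq α]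

theorem Set.Pairwise.inter_eq_insert_of_erase {T : ι → Finset α} {Δ : Set ι} {a : α}
    {S : Finset α} (hΔ : Δ.Pairwise fun β γ => (T β).erase a ∩ (T γ).erase a = S)
    (ha : ∀ γ ∈ Δ, a ∈ T γ) : Δ.Pairwise fun β γ => T β ∩ T γ = insert a S := by
  intro β hβ γ hγ hne
  rw [← hΔ hβ hγ hne, Finset.erase_inter, Finset.inter_erase, Finset.erase_idem,
    Finset.insert_erase (Finset.mem_inter.2 ⟨ha β hβ, ha γ hγ⟩)]

theorem exists_deltaSystem_of_card_eq (hreg : κ.IsRegular) (hunc : ℵ₀ < κ) (n : ℕ) :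
    ∀ (T : ι → Finset α) {s : Set ι}, κ ≤ #s → (∀ γ ∈ s, (T γ).card = n) →
      ∃ Δ ⊆ s, κ ≤ #Δ ∧ ∃ S : Finset α, Δ.Pairwise fun β γ => T β ∩ T γ = S := by
  induction n with
  | zero =>
    intro T s hs hcard
    refine ⟨s, subset_rfl, hs, ∅, fun β hβ γ _ _ => ?_⟩
    simp only [Finset.card_eq_zero.1 (hcard β hβ), Finset.empty_inter]
  | succ n ih =>
    intro T s hs hcard
    by_cases hpopular : ∃ a, κ ≤ #{γ ∈ s | a ∈ T γ}
    · obtain ⟨a, ha⟩ := hpopular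
      have hcard' : ∀ γ ∈ {γ ∈ s | a ∈ T γ}, ((T γ).erase a).card = n := fun γ hγ => by
        rw [Finset.card_erase_of_mem hγ.2, hcard γ hγ.1, Nat.add_sub_cancel]
      obtain ⟨Δ, hΔs, hΔ, S, hS⟩ := ih (fun γ => (T γ).erase a) ha hcard'
      exact ⟨Δ, hΔs.trans (sep_subset _ _), hΔ, insert a S,
        hS.inter_eq_insert_of_erase fun γ hγ => (hΔs hγ).2⟩
    · simp only [not_exists, not_le] at hpopular
      obtain ⟨Δ, hΔs, hΔ, hdisj⟩ := exists_pairwiseDisjoint_of_forall_mk_lt hreg hunc T hs hpopular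
      exact ⟨Δ, hΔs, hΔ, ∅, hdisj.mono' fun β γ h => Finset.disjoint_iff_inter_eq_empty.1 h⟩

/-- Shanin's Δ-system lemma for uncountable regular cardinals. -/
theorem delta_system_lemma {α ι : Type u} [DecidableEq α] (κ : Cardinal.{u})
    (hreg : κ.IsRegular) (hunc : Cardinal.aleph0 < κ)
    (T : ι → Finset α) (hι : #ι = κ) :
    ∃ Δ : Set ι, #Δ = κ ∧ ∃ S : Finset α,
      ∀ β ∈ Δ, ∀ γ ∈ Δ, β ≠ γ → T β ∩ T γ = S := by
  obtain ⟨n, hn⟩ := infinite_pigeonhole_card (fun γ => ULift.up.{u} (T γ).card) κ hι.ge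
    hreg.aleph0_le (by simpa [hreg.cof_ord] using hunc)
  obtain ⟨Δ, -, hΔ, S, hS⟩ := exists_deltaSystem_of_card_eq hreg hunc n.down T hn
    fun γ hγ => congrArg ULift.down hγ
  obtain ⟨Δ', hΔ'Δ, hΔ'⟩ := le_mk_iff_exists_subset.1 hΔ
  exact ⟨Δ', hΔ', S, fun β hβ γ hγ => hS (hΔ'Δ hβ) (hΔ'Δ hγ)⟩
end

section
/- Let X be a Baire space such that every regular uncountable cardinal is a caliber of X. Then for every ordinal α and every increasing family (A_ξ : ξ < α) of closed subsets of X, int(⋃_{ξ<α} A_ξ) ⊆ closure(⋃_{ξ<α} int(A_ξ)). In particular, X is strongly Baire. -/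
/-!
If `W` is a nonempty open set covered by an increasing family `(A ξ)_{ξ < α}` of closed sets,
some `A ξ` has interior meeting `W`. Reindex the family along a fundamental sequence of `α`,
of length `κ = cof α`. If `κ` is countable, this is the Baire category theorem. Otherwise `κ` is
regular and uncountable, hence a caliber: if no `A ξ` contained `W`, then `κ` of the nonempty open
sets `W \ A ξ` would share a point of `W`, but any `κ` indices are cofinal in `α`, so that point
lies in one of their `A ξ`.
-/

universe u

/-- A cardinal `κ` is a caliber of `X` if every `κ`-indexed family of nonempty open
subsets of `X` admits a `κ`-sized subfamily with nonempty intersection. -/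
def IsCaliber (X : Type u) [TopologicalSpace X] (κ : Cardinal.{u}) : Prop :=
  ∀ (ι : Type u) (U : ι → Set X), Cardinal.mk ι = κ →
    (∀ i, IsOpen (U i) ∧ (U i).Nonempty) →
    ∃ B : Set ι, Cardinal.mk B = κ ∧ (⋂ i ∈ B, U i).Nonempty

/-- `X` is strongly Baire if for every ordinal `α` and all increasing families
`(A ξ : ξ < α)`, `(B ξ : ξ < α)` of closed subsets of `X` such that `(B ξ)` occupies
`(A ξ)` (i.e. `A ξ ⊆ B ξ` for all `ξ < α` and `A β ⊆ ⋃_{ξ<β} B ξ` for limit `β < α`),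
the interior of `⋃_{ξ<α} A ξ` is contained in the closure of `⋃_{ξ<α} interior (B ξ)`. -/
def StronglyBaire (X : Type u) [TopologicalSpace X] : Prop :=
  ∀ (α : Ordinal.{u}) (A B : Ordinal.{u} → Set X),
    (∀ ξ < α, IsClosed (A ξ)) → (∀ ξ < α, IsClosed (B ξ)) →
    (∀ ξ η, ξ ≤ η → η < α → A ξ ⊆ A η) →
    (∀ ξ η, ξ ≤ η → η < α → B ξ ⊆ B η) →
    (∀ ξ < α, A ξ ⊆ B ξ) →
    (∀ β, Order.IsSuccLimit β → β < α → A β ⊆ ⋃ ξ ∈ Set.Iio β, B ξ) →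
    interior (⋃ ξ ∈ Set.Iio α, A ξ) ⊆ closure (⋃ ξ ∈ Set.Iio α, interior (B ξ))

open Set Cardinal Order

theorem exists_inter_interior_nonempty_of_subset_iUnion {X ι : Type*} [TopologicalSpace X]
    [BaireSpace X] [Countable ι] {F : ι → Set X} (hF : ∀ i, IsClosed (F i)) {W : Set X}
    (hW : IsOpen W) (hne : W.Nonempty) (hcover : W ⊆ ⋃ i, F i) :
    ∃ i, (W ∩ interior (F i)).Nonempty := by
  by_contra! h
  -- `W` would lie in the union of the frontiers of the `F i`, which are nowhere dense.
  refine not_isMeagre_of_isOpen hW hne <| IsMeagre.mono (fun y hy => ?_) <|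
    isMeagre_iUnion fun i =>
      ((isClosed_frontier.isNowhereDense_iff).2 (interior_frontier (hF i))).isMeagre
  obtain ⟨i, hyi⟩ := mem_iUnion.1 (hcover hy)
  have hyint : y ∉ interior (F i) := fun hyint => (h i).subset ⟨hy, hyint⟩
  exact mem_iUnion.2 ⟨i, (hF i).frontier_eq ▸ ⟨hyi, hyint⟩⟩

theorem IsCaliber.exists_subset_of_forall_subset_biUnion {X : Type u} [TopologicalSpace X]
    {κ : Cardinal.{u}} (h : IsCaliber X κ) {ι : Type u} [Nonempty ι] (hι : #ι = κ)
    {F : ι → Set X} (hF : ∀ i, IsClosed (F i)) {W : Set X} (hW : IsOpen W)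
    (hcover : ∀ B : Set ι, #B = κ → W ⊆ ⋃ i ∈ B, F i) : ∃ i, W ⊆ F i := by
  by_contra! hnot
  obtain ⟨B, hB, y, hy⟩ :=
    h ι (fun i => W \ F i) hι fun i => ⟨hW.sdiff (hF i), sdiff_nonempty.2 (hnot i)⟩
  obtain ⟨⟨b, hb⟩⟩ : Nonempty B := mk_ne_zero_iff.1 (hB.trans hι.symm ▸ mk_ne_zero ι)
  obtain ⟨i, hi, hyi⟩ := mem_iUnion₂.1 (hcover B hB (mem_iInter₂.1 hy b hb).1)
  exact (mem_iInter₂.1 hy i hi).2 hyi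

theorem Cardinal.isCofinal_of_mk_eq {c : Cardinal} {B : Set c.ord.ToType} (hB : #B = c) :
    IsCofinal B := by
  intro a
  by_contra! h
  have hlt := (mk_le_mk_of_subset fun b hb => h b hb).trans_lt (mk_Iio_lt a (by simp))
  simp [hB] at hlt

theorem Ordinal.exists_monotone_cofinal_toType_cof_ord (α : Ordinal.{u}) :
    ∃ g : α.cof.ord.ToType → Ordinal.{u},
      Monotone g ∧ (∀ i, g i < α) ∧ ∀ η < α, ∃ i, η ≤ g i := by
  obtain ⟨f, hf⟩ := Ordinal.exists_isFundamentalSeq (o := α) rfl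
  refine ⟨fun i => (f (Ordinal.ToType.mk.symm i)).1,
    fun i j hij => hf.strictMono.monotone (Ordinal.ToType.mk.symm.monotone hij),
    fun i => (f _).2, fun η hη => ?_⟩
  obtain ⟨_, ⟨c, rfl⟩, hc⟩ := hf.isCofinal_range ⟨η, hη⟩
  exact ⟨Ordinal.ToType.mk c, by simpa using (show η ≤ (f c).1 from hc)⟩

theorem biUnion_Iio_subset_biUnion_of_cofinal {X β ι : Type*} [Preorder β] {α : β}
    {A : β → Set X} (hmono : ∀ ξ η, ξ ≤ η → η < α → A ξ ⊆ A η) {g : ι → β}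
    (hg : ∀ i, g i < α) {B : Set ι} (hB : ∀ η < α, ∃ b ∈ B, η ≤ g b) :
    ⋃ ξ ∈ Iio α, A ξ ⊆ ⋃ b ∈ B, A (g b) := by
  refine iUnion₂_subset fun ξ hξ => ?_
  obtain ⟨b, hb, hξb⟩ := hB ξ hξ
  exact (hmono ξ (g b) hξb (hg b)).trans (subset_biUnion_of_mem (u := fun b => A (g b)) hb)

theorem exists_inter_interior_nonempty_of_subset_biUnion_Iio {X : Type u} [TopologicalSpace X]
    [BaireSpace X] (hcal : ∀ κ : Cardinal.{u}, κ.IsRegular → ℵ₀ < κ → IsCaliber X κ)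
    {α : Ordinal.{u}} {A : Ordinal.{u} → Set X} (hA : ∀ ξ < α, IsClosed (A ξ))
    (hmono : ∀ ξ η, ξ ≤ η → η < α → A ξ ⊆ A η) {W : Set X} (hW : IsOpen W)
    (hne : W.Nonempty) (hcover : W ⊆ ⋃ ξ ∈ Iio α, A ξ) :
    ∃ ξ < α, (W ∩ interior (A ξ)).Nonempty := by
  obtain ⟨g, hg_mono, hg_lt, hg_cofinal⟩ := α.exists_monotone_cofinal_toType_cof_ord
  have hgA : ∀ i, IsClosed (A (g i)) := fun i => hA _ (hg_lt i)
  have hsub : ∀ B : Set α.cof.ord.ToType, #B = α.cof → W ⊆ ⋃ b ∈ B, A (g b) := by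
    refine fun B hB => hcover.trans (biUnion_Iio_subset_biUnion_of_cofinal hmono hg_lt ?_)
    intro η hη
    obtain ⟨i, hi⟩ := hg_cofinal η hη
    obtain ⟨b, hb, hib⟩ := isCofinal_of_mk_eq hB i
    exact ⟨b, hb, hi.trans (hg_mono hib)⟩
  rcases le_or_gt α.cof ℵ₀ with hcount | hunc
  · have : Countable α.cof.ord.ToType := by
      rwa [← mk_le_aleph0_iff, mk_ord_toType]
    obtain ⟨i, hi⟩ := exists_inter_interior_nonempty_of_subset_iUnion hgA hW hne
      (by simpa using hsub univ (by simp))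
    exact ⟨g i, hg_lt i, hi⟩
  · have hlim : IsSuccLimit α := Ordinal.one_lt_cof_iff.1 (one_lt_aleph0.trans hunc)
    have : Nonempty α.cof.ord.ToType := by
      rw [← mk_ne_zero_iff, mk_ord_toType]
      exact (aleph0_pos.trans hunc).ne'
    obtain ⟨i, hi⟩ := (hcal _ (isRegular_cof hlim) hunc).exists_subset_of_forall_subset_biUnion
      (mk_ord_toType _) hgA hW hsub
    exact ⟨g i, hg_lt i, by rwa [inter_eq_left.2 (interior_maximal hi hW)]⟩

theorem interior_biUnion_Iio_subset_closure_biUnion_interior {X : Type u} [TopologicalSpace X]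
    [BaireSpace X] (hcal : ∀ κ : Cardinal.{u}, κ.IsRegular → ℵ₀ < κ → IsCaliber X κ)
    {α : Ordinal.{u}} {A : Ordinal.{u} → Set X} (hA : ∀ ξ < α, IsClosed (A ξ))
    (hmono : ∀ ξ η, ξ ≤ η → η < α → A ξ ⊆ A η) :
    interior (⋃ ξ ∈ Iio α, A ξ) ⊆ closure (⋃ ξ ∈ Iio α, interior (A ξ)) := by
  refine fun x hx => mem_closure_iff.2 fun N hN hxN => ?_
  obtain ⟨ξ, hξ, y, ⟨hyN, -⟩, hyA⟩ := exists_inter_interior_nonempty_of_subset_biUnion_Iio hcal hA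
    hmono (hN.inter isOpen_interior) ⟨x, hxN, hx⟩ (inter_subset_right.trans interior_subset)
  exact ⟨y, hyN, mem_biUnion hξ hyA⟩

theorem stronglyBaire_of_interior_biUnion_subset_closure {X : Type u} [TopologicalSpace X]
    (h : ∀ (α : Ordinal.{u}) (A : Ordinal.{u} → Set X),
      (∀ ξ < α, IsClosed (A ξ)) → (∀ ξ η, ξ ≤ η → η < α → A ξ ⊆ A η) →
      interior (⋃ ξ ∈ Iio α, A ξ) ⊆ closure (⋃ ξ ∈ Iio α, interior (A ξ))) :
    StronglyBaire X := fun α _ B _ hB _ hBmono hAB _ =>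
  (interior_mono (biUnion_mono subset_rfl hAB)).trans (h α B hB hBmono)

/-- A Baire space in which every regular uncountable cardinal is a caliber satisfies
`int (⋃ A ξ) ⊆ closure (⋃ int (A ξ))` for every ordinal-indexed increasing family of
closed sets; in particular it is strongly Baire. -/
theorem baire_caliber_stronglyBaire (X : Type u) [TopologicalSpace X] [BaireSpace X]
    (hcal : ∀ κ : Cardinal.{u}, κ.IsRegular → Cardinal.aleph0 < κ → IsCaliber X κ) :
    (∀ (α : Ordinal.{u}) (A : Ordinal.{u} → Set X),
      (∀ ξ < α, IsClosed (A ξ)) → (∀ ξ η, ξ ≤ η → η < α → A ξ ⊆ A η) →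
      interior (⋃ ξ ∈ Set.Iio α, A ξ) ⊆ closure (⋃ ξ ∈ Set.Iio α, interior (A ξ)))
    ∧ StronglyBaire X :=
  have h := fun _ _ hA hmono => interior_biUnion_Iio_subset_closure_biUnion_interior hcal hA hmono
  ⟨h, stronglyBaire_of_interior_biUnion_subset_closure h⟩
end

section
/- If a product X = ∏_{t∈T} X_t of separable topological spaces is a Baire space, then X is a strongly Baire space. -/
/-!
It suffices that whenever an increasing family of closed sets `B ξ`, `ξ < α`, covers a nonempty
open set `W`, the interior of some `B ξ` meets `W`. Pass to a cofinal subfamily of order type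
`κ = cf α`. If `κ ≤ ℵ₀` this is the Baire property. Otherwise `κ` is regular and uncountable, and
every point of `W` lies in fewer than `κ` of the open sets `W \ B ξ`; since the product has
caliber `κ`, one of them must be empty. Caliber `κ` passes from the separable factors to the
product by the Δ-system lemma applied to the supports of basic open boxes.
-/

universe u

open Cardinal Set

section DeltaSystem

variable {κ : Cardinal.{u}} {ι T : Type u}

lemma exists_pairwiseDisjoint_of_card_setOf_mem_lt (hκ : κ.IsRegular) (F : ι → Finset T)
    {S : Set ι} (hS : κ ≤ #S) (hsmall : ∀ x, #{i ∈ S | x ∈ F i} < κ) :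
    ∃ S' ⊆ S, κ ≤ #S' ∧ S'.PairwiseDisjoint F := by
  obtain ⟨M, hM⟩ := zorn_subset {M : Set ι | M ⊆ S ∧ M.PairwiseDisjoint F} fun c hc hchain =>
    ⟨⋃₀ c, ⟨sUnion_subset fun M hM => (hc hM).1,
      (hchain.pairwiseDisjoint_sUnion F).2 fun M hM => (hc hM).2⟩,
      fun _ => subset_sUnion_of_mem⟩
  refine ⟨M, hM.prop.1, le_of_not_gt fun hMκ => hS.not_gt ?_, hM.prop.2⟩
  set D : Set T := ⋃ j ∈ M, (F j : Set T)
  have hD : #D < κ := (card_biUnion_lt_iff_forall_of_isRegular hκ hMκ).2 fun j _ =>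
    (Finset.finite_toSet _).lt_aleph0.trans_le hκ.aleph0_le
  -- by maximality of `M`, every `i ∈ S \ M` meets `D`
  have hcover : S ⊆ M ∪ ⋃ x ∈ D, {i ∈ S | x ∈ F i} := by
    intro i hi
    by_cases hiM : i ∈ M
    · exact Or.inl hiM
    have hnot : ¬ (insert i M).PairwiseDisjoint F := fun h =>
      hiM (hM.mem_of_prop_insert ⟨insert_subset hi hM.prop.1, h⟩)
    obtain ⟨j, hjM, -, hij⟩ : ∃ j ∈ M, i ≠ j ∧ ¬ Disjoint (F i) (F j) := by
      simpa [pairwiseDisjoint_insert, hM.prop.2] using hnot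
    obtain ⟨x, hxi, hxj⟩ := Finset.not_disjoint_iff.1 hij
    exact Or.inr (mem_biUnion (mem_biUnion hjM hxj) ⟨hi, hxi⟩)
  calc #S ≤ #M + #(⋃ x ∈ D, {i ∈ S | x ∈ F i}) :=
        (mk_le_mk_of_subset hcover).trans (mk_union_le _ _)
    _ < κ := add_lt_of_lt hκ.aleph0_le hMκ
        ((card_biUnion_lt_iff_forall_of_isRegular hκ hD).2 fun x _ => hsmall x)

lemma exists_delta_system_of_card_eq [DecidableEq T] (hκ : κ.IsRegular) (n : ℕ) :
    ∀ (F : ι → Finset T) (S : Set ι), κ ≤ #S → (∀ i ∈ S, (F i).card = n) →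
      ∃ S' ⊆ S, ∃ R, κ ≤ #S' ∧ S'.Pairwise fun i j => F i ∩ F j = R := by
  induction n with
  | zero =>
    intro F S hS hcard
    refine ⟨S, subset_rfl, ∅, hS, fun i hi j hj _ => ?_⟩
    show F i ∩ F j = ∅
    rw [Finset.card_eq_zero.1 (hcard i hi), Finset.empty_inter]
  | succ n ih =>
    intro F S hS hcard
    by_cases hbig : ∃ x, κ ≤ #{i ∈ S | x ∈ F i}
    · obtain ⟨x, hx⟩ := hbig
      obtain ⟨S', hS'S, R, hS', hR⟩ := ih (fun i => (F i).erase x) _ hx fun i hi => by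
        rw [Finset.card_erase_of_mem hi.2, hcard i hi.1, Nat.add_sub_cancel]
      refine ⟨S', fun i hi => (hS'S hi).1, insert x R, hS', fun i hi j hj hij => ?_⟩
      rw [← hR hi hj hij, Finset.erase_inter, Finset.inter_erase, Finset.erase_idem,
        Finset.insert_erase (Finset.mem_inter.2 ⟨(hS'S hi).2, (hS'S hj).2⟩)]
    · obtain ⟨S', hS'S, hS', hdisj⟩ :=
        exists_pairwiseDisjoint_of_card_setOf_mem_lt hκ F hS fun x => not_le.1 (hbig ⟨x, ·⟩)
      exact ⟨S', hS'S, ∅, hS', hdisj.mono' fun i j => Finset.disjoint_iff_inter_eq_empty.1⟩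

theorem exists_delta_system [DecidableEq T] (hκ : κ.IsRegular) (hω : ℵ₀ < κ) (F : ι → Finset T)
    {S : Set ι} (hS : κ ≤ #S) : ∃ S' ⊆ S, ∃ R, κ ≤ #S' ∧ S'.Pairwise fun i j => F i ∩ F j = R := by
  obtain ⟨n, S₀, hS₀S, hS₀, hcard⟩ :=
    infinite_pigeonhole_set (fun i : S => ULift.up.{u} (F i).card) κ hS hκ.aleph0_le
      (by simpa [hκ.cof_ord] using hω)
  obtain ⟨S', hS'S₀, R, hS', hR⟩ :=
    exists_delta_system_of_card_eq hκ n.down F S₀ hS₀ fun i hi => congrArg ULift.down (hcard hi)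
  exact ⟨S', hS'S₀.trans hS₀S, R, hS', hR⟩

end DeltaSystem

lemma Set.Pairwise.exists_forall_ne_notMem {ι T : Type*} [DecidableEq T] {F : ι → Finset T}
    {R : Finset T} {S : Set ι} (hR : S.Pairwise fun i j => F i ∩ F j = R) (hS : S.Nonempty)
    {t : T} (ht : t ∉ R) :
    ∃ j ∈ S, ∀ i ∈ S, i ≠ j → t ∉ F i := by
  by_cases hex : ∃ j ∈ S, t ∈ F j
  · obtain ⟨j, hj, htj⟩ := hex
    exact ⟨j, hj, fun i hi hij hti => ht (hR hi hj hij ▸ Finset.mem_inter.2 ⟨hti, htj⟩)⟩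
  · push Not at hex
    obtain ⟨j, hj⟩ := hS
    exact ⟨j, hj, fun i hi _ => hex i hi⟩

open TopologicalSpace

/-- Caliber `κ`, in a form relative to an index set `S` so that it can be iterated on
subfamilies. -/
def HasCaliber (κ : Cardinal.{u}) (X : Type*) [TopologicalSpace X] : Prop :=
  ∀ {ι : Type u} (U : ι → Set X) (S : Set ι), (∀ i, IsOpen (U i)) → (∀ i, (U i).Nonempty) →
    κ ≤ #S → ∃ S' ⊆ S, κ ≤ #S' ∧ (⋂ i ∈ S', U i).Nonempty

theorem hasCaliber_of_separableSpace {κ : Cardinal.{u}} {X : Type u} [TopologicalSpace X]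
    [SeparableSpace X] (hκ : ℵ₀ < κ.ord.cof) : HasCaliber κ X := by
  intro ι U S hUo hUne hS
  obtain ⟨D, hDc, hDd⟩ := exists_countable_dense X
  choose d hdD hdU using fun i => hDd.exists_mem_open (hUo i) (hUne i)
  obtain ⟨x, S', hS'S, hS', hx⟩ :=
    infinite_pigeonhole_set (fun i : S => (⟨d i, hdD i⟩ : D)) κ hS
      (hκ.le.trans (Ordinal.cof_ord_le κ)) (hDc.le_aleph0.trans_lt hκ)
  exact ⟨S', hS'S, hS', x, mem_iInter₂.2 fun i hi => hx hi ▸ hdU i⟩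

lemma exists_univ_pi_subset_of_isOpen {T : Type*} {X : T → Type*} [∀ t, TopologicalSpace (X t)]
    {U : Set (∀ t, X t)} (hU : IsOpen U) {x : ∀ t, X t} (hx : x ∈ U) :
    ∃ (F : Finset T) (V : ∀ t, Set (X t)),
      (∀ t, IsOpen (V t) ∧ x t ∈ V t) ∧ (∀ t ∉ F, V t = Set.univ) ∧ pi Set.univ V ⊆ U := by
  classical
  obtain ⟨F, V, hV, hVU⟩ := isOpen_pi_iff.1 hU x hx
  refine ⟨F, fun t => if t ∈ F then V t else univ, fun t => ?_, fun t ht => if_neg ht, ?_⟩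
  · by_cases ht : t ∈ F
    · simpa only [if_pos ht] using hV t ht
    · simp only [if_neg ht, isOpen_univ, mem_univ, and_self]
  · simpa only [← Finset.mem_coe, pi_univ_ite] using hVU

lemma exists_subset_forall_mem_biInter_nonempty {κ : Cardinal.{u}} {T : Type*}
    {X : T → Type*} [∀ t, TopologicalSpace (X t)] (h : ∀ t, HasCaliber κ (X t)) {ι : Type u}
    (V : ι → ∀ t, Set (X t)) (hVo : ∀ i t, IsOpen (V i t)) (hVne : ∀ i t, (V i t).Nonempty)
    (R : Finset T) {S : Set ι} (hS : κ ≤ #S) :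
    ∃ S' ⊆ S, κ ≤ #S' ∧ ∀ t ∈ R, (⋂ i ∈ S', V i t).Nonempty := by
  classical
  induction R using Finset.induction_on with
  | empty => exact ⟨S, subset_rfl, hS, by simp⟩
  | insert t R _ ih =>
    obtain ⟨S₁, hS₁S, hS₁, hR⟩ := ih
    obtain ⟨S₂, hS₂S₁, hS₂, ht⟩ := h t (fun i => V i t) S₁ (hVo · t) (hVne · t) hS₁
    refine ⟨S₂, hS₂S₁.trans hS₁S, hS₂, ?_⟩
    simp only [Finset.mem_insert, forall_eq_or_imp]
    exact ⟨ht, fun t' ht' => (hR t' ht').mono (biInter_subset_biInter_left hS₂S₁)⟩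

theorem HasCaliber.pi {κ : Cardinal.{u}} {T : Type u} {X : T → Type*}
    [∀ t, TopologicalSpace (X t)] (hκ : κ.IsRegular) (hω : ℵ₀ < κ)
    (h : ∀ t, HasCaliber κ (X t)) : HasCaliber κ (∀ t, X t) := by
  classical
  intro ι U S hUo hUne hS
  choose F V hV hVF hVU using fun i => exists_univ_pi_subset_of_isOpen (hUo i) (hUne i).some_mem
  obtain ⟨S₁, hS₁S, R, hS₁, hR⟩ := exists_delta_system hκ hω F hS
  obtain ⟨S₂, hS₂S₁, hS₂, hRne⟩ := exists_subset_forall_mem_biInter_nonempty h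
    V (fun i t => (hV i t).1) (fun i t => ⟨_, (hV i t).2⟩) R hS₁
  have hS₂ne : S₂.Nonempty := nonempty_coe_sort.1 (mk_ne_zero_iff.1 (hκ.pos.trans_le hS₂).ne')
  have hcoord : ∀ t, (⋂ i ∈ S₂, V i t).Nonempty := by
    intro t
    by_cases htR : t ∈ R
    · exact hRne t htR
    -- off the root, at most one box `j` of the Δ-system constrains the coordinate `t`
    obtain ⟨j, hj, hjt⟩ := (hR.mono hS₂S₁).exists_forall_ne_notMem hS₂ne htR
    refine ⟨(hUne j).some t, mem_iInter₂.2 fun i hi => ?_⟩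
    rcases eq_or_ne i j with rfl | hij
    exacts [(hV i t).2, hVF i t (hjt i hi hij) ▸ mem_univ _]
  obtain ⟨y, hy⟩ := univ_pi_nonempty_iff.2 hcoord
  exact ⟨S₂, hS₂S₁.trans hS₁S, hS₂, y, mem_iInter₂.2 fun i hi =>
    hVU i fun t _ => mem_iInter₂.1 (hy t trivial) i hi⟩

lemma HasCaliber.exists_eq_empty {κ : Cardinal.{u}} {X : Type*} [TopologicalSpace X]
    (h : HasCaliber κ X) {ι : Type u} {U : ι → Set X} (hU : ∀ i, IsOpen (U i)) (hι : κ ≤ #ι)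
    (hsmall : ∀ x, #{i | x ∈ U i} < κ) : ∃ i, U i = ∅ := by
  by_contra! hne
  obtain ⟨S, -, hS, x, hx⟩ := h U Set.univ hU hne (by rwa [mk_univ])
  exact (hS.trans (mk_le_mk_of_subset fun i hi => mem_iInter₂.1 hx i hi)).not_gt (hsmall x)

lemma exists_inter_interior_nonempty_of_subset_iUnion_of_countable {X : Type*}
    [TopologicalSpace X] [BaireSpace X] {ι : Type*} [Countable ι] {B : ι → Set X}
    (hB : ∀ i, IsClosed (B i)) {W : Set X} (hW : IsOpen W) (hWne : W.Nonempty)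
    (hWB : W ⊆ ⋃ i, B i) : ∃ i, (W ∩ interior (B i)).Nonempty := by
  by_contra! h
  refine not_isMeagre_of_isOpen hW hWne ((isMeagre_iUnion fun i =>
    (isClosed_frontier.isNowhereDense_iff.2 (interior_frontier (hB i))).isMeagre).mono ?_)
  intro x hx
  obtain ⟨i, hxi⟩ := mem_iUnion.1 (hWB hx)
  refine mem_iUnion.2 ⟨i, (hB i).frontier_eq ▸ ⟨hxi, fun hxint => ?_⟩⟩
  exact (h i).subset ⟨hx, hxint⟩

lemma HasCaliber.exists_subset_of_subset_iUnion {X : Type*} [TopologicalSpace X]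
    {ι : Type u} [LinearOrder ι] {κ : Cardinal.{u}} (h : HasCaliber κ X) (hκ : κ ≠ 0)
    (hι : κ ≤ #ι) (hIio : ∀ j : ι, #(Iio j) < κ) {B : ι → Set X} (hB : ∀ i, IsClosed (B i))
    (hmono : Monotone B) {W : Set X} (hW : IsOpen W) (hWB : W ⊆ ⋃ i, B i) :
    ∃ i, W ⊆ B i := by
  have hsmall : ∀ x, #{i | x ∈ W \ B i} < κ := by
    intro x
    by_cases hx : x ∈ W
    · obtain ⟨j, hxj⟩ := mem_iUnion.1 (hWB hx)
      refine (mk_le_mk_of_subset fun i hi => ?_).trans_lt (hIio j)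
      exact lt_of_not_ge fun hji => hi.2 (hmono hji hxj)
    · simpa [hx] using pos_iff_ne_zero.2 hκ
  obtain ⟨i, hi⟩ := h.exists_eq_empty (fun i => hW.sdiff (hB i)) hι hsmall
  exact ⟨i, sdiff_eq_empty.1 hi⟩

lemma exists_inter_interior_nonempty_of_subset_iUnion_s5 {X : Type*} [TopologicalSpace X]
    [BaireSpace X] (hcal : ∀ κ : Cardinal.{u}, κ.IsRegular → ℵ₀ < κ → HasCaliber κ X)
    {ι : Type u} [LinearOrder ι] [WellFoundedLT ι] {B : ι → Set X} (hB : ∀ i, IsClosed (B i))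
    (hmono : Monotone B) {W : Set X} (hW : IsOpen W) (hWne : W.Nonempty) (hWB : W ⊆ ⋃ i, B i) :
    ∃ i, (W ∩ interior (B i)).Nonempty := by
  -- a cofinal `s` of order type `cof ι`: its proper initial segments have fewer than `cof ι` points
  obtain ⟨s, hs, hs_type⟩ := Ordinal.exists_ord_cof_eq ι
  have hs_card : #s = Order.cof ι := by
    rw [← Ordinal.card_type (α := s) (· < ·), hs_type, card_ord]
  have hWs : W ⊆ ⋃ i : s, B i := fun x hx => by
    obtain ⟨j, hxj⟩ := mem_iUnion.1 (hWB hx)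
    obtain ⟨i, his, hji⟩ := hs j
    exact mem_iUnion.2 ⟨⟨i, his⟩, hmono hji hxj⟩
  rcases le_or_gt (Order.cof ι) ℵ₀ with hcount | hunc
  · have : Countable s := mk_le_aleph0_iff.1 (hs_card ▸ hcount)
    obtain ⟨i, hi⟩ := exists_inter_interior_nonempty_of_subset_iUnion_of_countable
      (fun i : s => hB i) hW hWne hWs
    exact ⟨i, hi⟩
  · have hreg : (Order.cof ι).IsRegular := by
      rw [← Ordinal.cof_type]
      refine isRegular_cof (Ordinal.one_lt_cof_iff.1 ?_)
      rw [Ordinal.cof_type]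
      exact one_lt_aleph0.trans hunc
    obtain ⟨i, hi⟩ := HasCaliber.exists_subset_of_subset_iUnion (hcal _ hreg hunc)
      hreg.ne_zero hs_card.ge
      (fun j => hs_card ▸ mk_Iio_lt j (by rw [hs_card, hs_type]))
      (fun i : s => hB i) (fun i j hij => hmono hij) hW hWs
    exact ⟨i, hWne.mono fun x hx => ⟨hx, interior_maximal hi hW hx⟩⟩

theorem stronglyBaire_of_hasCaliber {X : Type u} [TopologicalSpace X] [BaireSpace X]
    (hcal : ∀ κ : Cardinal.{u}, κ.IsRegular → ℵ₀ < κ → HasCaliber κ X) : StronglyBaire X := by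
  intro α A B _ hB _ hBmono hAB _ z hz
  refine mem_closure_iff.2 fun N hN hzN => ?_
  have hWB :
      N ∩ interior (⋃ ξ ∈ Iio α, A ξ) ⊆ ⋃ x : α.ToType, B (Ordinal.ToType.mk.symm x) := by
    intro y ⟨_, hy⟩
    obtain ⟨ξ, hξ, hyξ⟩ := mem_iUnion₂.1 (interior_subset hy)
    exact mem_iUnion.2 ⟨Ordinal.ToType.mk ⟨ξ, hξ⟩, by simpa using hAB ξ hξ hyξ⟩
  obtain ⟨x, y, hyN, hyB⟩ := exists_inter_interior_nonempty_of_subset_iUnion_s5 hcal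
    (fun x => hB _ (Ordinal.ToType.mk.symm x).2)
    (fun x x' hxx' =>
      hBmono _ _ (Ordinal.ToType.mk.symm.monotone hxx') (Ordinal.ToType.mk.symm x').2)
    (hN.inter isOpen_interior) ⟨z, hzN, hz⟩ hWB
  exact ⟨y, hyN.1, mem_biUnion (Ordinal.ToType.mk.symm x).2 hyB⟩

/-- If a product of separable spaces is a Baire space then it is strongly Baire. -/
theorem product_separable_baire_stronglyBaire {T : Type u} (X : T → Type u)
    [∀ t, TopologicalSpace (X t)] [∀ t, TopologicalSpace.SeparableSpace (X t)]
    [BaireSpace (∀ t, X t)] :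
    StronglyBaire (∀ t, X t) := by
  refine stronglyBaire_of_hasCaliber fun κ hκ hω => HasCaliber.pi hκ hω fun t => ?_
  exact hasCaliber_of_separableSpace (hκ.cof_ord.symm ▸ hω)
end

section
/- If κ is a caliber of each space X_t (t ∈ T) and κ is an uncountable regular cardinal, then κ is a caliber of the product space ∏_{t∈T} X_t. -/
/-!
Each `U i` contains a basic box `∏_{t ∈ F i} v i t` with finite support `F i`. By the Δ-system
lemma, `κ` of the supports pairwise meet in one finite root `R`: if some coordinate lies in `κ`
supports, remove it and recurse on the size of the supports (made bounded by pigeonhole, as `κ`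
is uncountable and regular); otherwise a maximal pairwise disjoint subfamily has size `κ`, since
by regularity fewer than `κ` supports meet a family of fewer than `κ` finite sets. Using the
caliber of `X t` once for each of the finitely many `t ∈ R` leaves `κ` boxes with a common point
on `R`; off `R` their supports are pairwise disjoint, so that point extends to one in all of them.
-/

universe u

open Cardinal Set

section

variable {ι T : Type u} {κ : Cardinal.{u}}

theorem exists_subset_pairwiseDisjoint_of_forall_mk_lt (hreg : κ.IsRegular) (F : ι → Finset T)
    {A : Set ι} (hA : κ ≤ #A) (hF : ∀ t, #{i ∈ A | t ∈ F i} < κ) :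
    ∃ S ⊆ A, κ ≤ #S ∧ S.PairwiseDisjoint F := by
  obtain ⟨M, ⟨hMA, hMF⟩, hMmax⟩ := zorn_subset {S | S ⊆ A ∧ S.PairwiseDisjoint F}
    fun c hc hchain => ⟨⋃₀ c, ⟨sUnion_subset fun S hS => (hc hS).1,
      (hchain.pairwiseDisjoint_sUnion F).2 fun S hS => (hc hS).2⟩, fun _ => subset_sUnion_of_mem⟩
  refine ⟨M, hMA, ?_, hMF⟩
  by_contra! hM
  have hcover : A ⊆ M ∪ ⋃ j ∈ M, ⋃ t ∈ (F j : Set T), {i ∈ A | t ∈ F i} := by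
    intro i hiA
    by_cases hiM : i ∈ M
    · exact Or.inl hiM
    have hnot : ¬ (insert i M).PairwiseDisjoint F := fun hdisj =>
      hiM (hMmax ⟨insert_subset hiA hMA, hdisj⟩ (subset_insert i M) (mem_insert i M))
    rw [pairwiseDisjoint_insert] at hnot
    push Not at hnot
    obtain ⟨j, hjM, -, hij⟩ := hnot hMF
    obtain ⟨t, hti, htj⟩ := Finset.not_disjoint_iff.1 hij
    exact Or.inr (mem_biUnion hjM (mem_biUnion (Finset.mem_coe.2 htj) ⟨hiA, hti⟩))
  have hfin : ∀ j, #(F j : Set T) < κ := fun j =>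
    (F j).finite_toSet.lt_aleph0.trans_le hreg.aleph0_le
  refine (hA.trans (mk_le_mk_of_subset hcover)).not_gt
    ((mk_union_le _ _).trans_lt (add_lt_of_lt hreg.aleph0_le hM ?_))
  rw [card_biUnion_lt_iff_forall_of_isRegular hreg hM]
  intro j _
  rw [card_biUnion_lt_iff_forall_of_isRegular hreg (hfin j)]
  exact fun t _ => hF t

theorem exists_subset_deltaSystem_of_card_le [DecidableEq T] (hreg : κ.IsRegular) (n : ℕ) :
    ∀ (F : ι → Finset T) (A : Set ι), κ ≤ #A → (∀ i ∈ A, (F i).card ≤ n) →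
      ∃ S ⊆ A, κ ≤ #S ∧ ∃ R, S.Pairwise fun i j => F i ∩ F j = R := by
  induction n with
  | zero =>
    intro F A hA hF
    refine ⟨A, subset_rfl, hA, ∅, fun i hi j _ _ => ?_⟩
    simp only [Finset.card_eq_zero.1 (Nat.le_zero.1 (hF i hi)), Finset.empty_inter]
  | succ n ih =>
    intro F A hA hF
    by_cases hlight : ∀ t, #{i ∈ A | t ∈ F i} < κ
    · obtain ⟨S, hSA, hS, hSF⟩ := exists_subset_pairwiseDisjoint_of_forall_mk_lt hreg F hA hlight
      exact ⟨S, hSA, hS, ∅, fun i hi j hj hij =>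
        Finset.disjoint_iff_inter_eq_empty.1 (hSF hi hj hij)⟩
    push Not at hlight
    obtain ⟨t, ht⟩ := hlight
    obtain ⟨S, hSA, hS, R, hSR⟩ := ih (fun i => (F i).erase t) {i ∈ A | t ∈ F i} ht
      fun i hi => by rw [Finset.card_erase_of_mem hi.2]; exact Nat.sub_le_of_le_add (hF i hi.1)
    refine ⟨S, fun i hi => (hSA hi).1, hS, insert t R, fun i hi j hj hij => ?_⟩
    dsimp only
    rw [← hSR hi hj hij, Finset.erase_inter, Finset.inter_erase, Finset.erase_idem,
      Finset.insert_erase (Finset.mem_inter.2 ⟨(hSA hi).2, (hSA hj).2⟩)]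

theorem exists_deltaSystem [DecidableEq T] (hreg : κ.IsRegular) (hunc : ℵ₀ < κ) (F : ι → Finset T)
    (hι : κ ≤ #ι) : ∃ S : Set ι, #S = κ ∧ ∃ R, S.Pairwise fun i j => F i ∩ F j = R := by
  obtain ⟨⟨n⟩, hn⟩ := infinite_pigeonhole_card (fun i => ULift.up.{u} (F i).card) κ hι
    hreg.aleph0_le (by simpa [hreg.cof_ord] using hunc)
  obtain ⟨S, -, hS, R, hSR⟩ := exists_subset_deltaSystem_of_card_le hreg n F _ hn
    fun i hi => (congrArg ULift.down hi).le
  obtain ⟨S', hS'S, hS'⟩ := le_mk_iff_exists_subset.1 hS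
  exact ⟨S', hS', R, hSR.mono hS'S⟩

theorem IsCaliber.exists_subset_biInter_nonempty {X : Type u} [TopologicalSpace X]
    (hX : IsCaliber X κ) {S : Set ι} (hS : #S = κ)
    {U : ι → Set X} (hU : ∀ i ∈ S, IsOpen (U i) ∧ (U i).Nonempty) :
    ∃ S' ⊆ S, #S' = κ ∧ (⋂ i ∈ S', U i).Nonempty := by
  obtain ⟨B, hB, x, hx⟩ := hX S (fun i => U i) hS fun i => hU i i.2
  refine ⟨Subtype.val '' B, image_subset_iff.2 fun i _ => i.2,
    (mk_image_eq Subtype.val_injective).trans hB, x, ?_⟩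
  simpa using hx

theorem exists_subset_forall_biInter_nonempty {X : T → Type u}
    [∀ t, TopologicalSpace (X t)] (hX : ∀ t, IsCaliber (X t) κ)
    {u : ι → ∀ t, Set (X t)} (R : Finset T) {S : Set ι} (hS : #S = κ)
    (hu : ∀ i ∈ S, ∀ t ∈ R, IsOpen (u i t) ∧ (u i t).Nonempty) :
    ∃ S' ⊆ S, #S' = κ ∧ ∀ t ∈ R, (⋂ i ∈ S', u i t).Nonempty := by
  induction R using Finset.cons_induction generalizing S with
  | empty => exact ⟨S, subset_rfl, hS, by simp⟩
  | cons a R _ ih =>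
    obtain ⟨S₁, hS₁S, hS₁, hR⟩ := ih hS fun i hi t ht => hu i hi t (Finset.mem_cons_of_mem ht)
    obtain ⟨S₂, hS₂S₁, hS₂, ha⟩ := (hX a).exists_subset_biInter_nonempty hS₁
      (U := fun i => u i a) fun i hi => hu i (hS₁S hi) a (Finset.mem_cons_self a R)
    refine ⟨S₂, hS₂S₁.trans hS₁S, hS₂, fun t ht => ?_⟩
    rcases Finset.mem_cons.1 ht with rfl | ht
    · exact ha
    · exact (hR t ht).mono (biInter_mono hS₂S₁ fun _ _ => subset_rfl)

end

theorem nonempty_biInter_pi_of_pairwise_inter_subset {ι T : Type*} {X : T → Type*}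
    {S : Set ι} {F : ι → Set T} {R : Set T} (hSF : S.Pairwise fun i j => F i ∩ F j ⊆ R)
    {u : ι → ∀ t, Set (X t)} {f : ι → ∀ t, X t} (hf : ∀ i ∈ S, f i ∈ (F i).pi (u i))
    {x : ∀ t, X t} (hx : ∀ t ∈ R, x t ∈ ⋂ i ∈ S, u i t) :
    (⋂ i ∈ S, (F i).pi (u i)).Nonempty := by
  classical
  refine ⟨fun t => if h : ∃ i ∈ S, t ∈ F i \ R then f h.choose t else x t,
    mem_iInter₂.2 fun i hi t ht => ?_⟩
  split_ifs with h
  · obtain ⟨hjS, htj, htR⟩ := h.choose_spec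
    have hji : h.choose = i := by
      by_contra hne
      exact htR (hSF hjS hi hne ⟨htj, ht⟩)
    exact hji ▸ hf _ hjS t htj
  · have htR : t ∈ R := by
      by_contra htR
      exact h ⟨i, hi, ht, htR⟩
    exact mem_iInter₂.1 (hx t htR) i hi

/-- If an uncountable regular cardinal `κ` is a caliber of each factor, then it is a
caliber of the product space. -/
theorem isCaliber_pi {T : Type u} (X : T → Type u) [∀ t, TopologicalSpace (X t)]
    (κ : Cardinal.{u}) (hreg : κ.IsRegular) (hunc : Cardinal.aleph0 < κ)
    (h : ∀ t, IsCaliber (X t) κ) :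
    IsCaliber (∀ t, X t) κ := by
  classical
  intro ι U hι hU
  have hbox : ∀ i, ∃ (f : ∀ t, X t) (F : Finset T) (v : ∀ t, Set (X t)),
      (∀ t ∈ F, IsOpen (v t) ∧ f t ∈ v t) ∧ (F : Set T).pi v ⊆ U i := fun i =>
    let ⟨f, hf⟩ := (hU i).2
    ⟨f, isOpen_pi_iff.1 (hU i).1 f hf⟩
  choose f F v hv hvU using hbox
  obtain ⟨S, hS, R, hSR⟩ := exists_deltaSystem hreg hunc F hι.ge
  have hRF : ∀ i ∈ S, R ⊆ F i := fun i hi => by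
    have : S.Nontrivial := nontrivial_coe_sort.1 <|
      one_lt_iff_nontrivial.1 (hS ▸ one_lt_aleph0.trans hunc)
    obtain ⟨j, hj, hji⟩ := this.exists_ne i
    exact hSR hi hj hji.symm ▸ Finset.inter_subset_left
  -- lets `choose!` below produce a total point `x`, arbitrary off `R`
  have hne : ∀ t, Nonempty (X t) := fun t =>
    (mk_ne_zero_iff.1 (hι ▸ hreg.pos.ne')).elim fun i => ⟨f i t⟩
  obtain ⟨S', hS'S, hS', hS'R⟩ := exists_subset_forall_biInter_nonempty h R hS
    fun i hi t ht => ⟨(hv i t (hRF i hi ht)).1, f i t, (hv i t (hRF i hi ht)).2⟩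
  choose! x hx using hS'R
  refine ⟨S', hS', (nonempty_biInter_pi_of_pairwise_inter_subset (f := f) ?_ ?_ hx).mono
    (biInter_mono subset_rfl fun i _ => hvU i)⟩
  · intro i hi j hj hij
    rw [← Finset.coe_inter, hSR (hS'S hi) (hS'S hj) hij]
  · exact fun i _ t ht => (hv i t ht).2
end

section
/- Let X be a strongly Baire space, Y a topological space, and f : X → Y a continuous surjection such that the preimage of every nowhere dense subset of Y is nowhere dense in X. Then Y is a strongly Baire space. -/
universe u v

def StronglyBaire' (Y : Type v) [TopologicalSpace Y] : Prop :=
  ∀ (α : Ordinal.{v}) (A B : Ordinal.{v} → Set Y),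
    (∀ ξ < α, IsClosed (A ξ)) → (∀ ξ < α, IsClosed (B ξ)) →
    (∀ ξ η, ξ ≤ η → η < α → A ξ ⊆ A η) →
    (∀ ξ η, ξ ≤ η → η < α → B ξ ⊆ B η) →
    (∀ ξ < α, A ξ ⊆ B ξ) →
    (∀ β, Order.IsSuccLimit β → β < α → A β ⊆ ⋃ ξ ∈ Set.Iio β, B ξ) →
    interior (⋃ ξ ∈ Set.Iio α, A ξ) ⊆ closure (⋃ ξ ∈ Set.Iio α, interior (B ξ))

/-!
Pulling an occupied chain of closed sets in `Y` back along `f` gives an occupied chain in `X`, so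
strong Baireness of `X` bounds the interior of the pulled-back union. For closed `B`, the set
`f ⁻¹' (B \ interior B)` is nowhere dense by hypothesis, whence
`interior (f ⁻¹' B) ⊆ closure (f ⁻¹' interior B)`; continuity and surjectivity push the resulting
inclusion back down to `Y`.

The chain in `Y` is indexed by ordinals of a universe unrelated to that of `X`. Keeping only the
indices at which the pair `(A ξ, B ξ)` changes leaves a chain that injects into `Set X × Set X`,
so it can be reindexed by ordinals of the universe of `X`; a limit index of the thinned chain is
still a limit index of the original one, because between it and any earlier index the pair changes
again.
-/

open Set Order

universe w

section FirstOccurrences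

variable {X : Type u} {ι : Type w} [LinearOrder ι] (A B : ι → Set X)

def firstOccurrences : Set ι := {i | ∀ j < i, (A j, B j) ≠ (A i, B i)}

theorem exists_mem_firstOccurrences_le [WellFoundedLT ι] (i : ι) :
    ∃ t ∈ firstOccurrences A B, t ≤ i ∧ A t = A i ∧ B t = B i := by
  obtain ⟨t, hti, hmin⟩ := wellFounded_lt.has_min {t | (A t, B t) = (A i, B i)} ⟨i, rfl⟩
  refine ⟨t, fun j hj hjt ↦ hmin j (hjt.trans hti) hj, not_lt.1 (hmin i rfl), ?_⟩
  exact Prod.ext_iff.1 hti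

theorem injOn_firstOccurrences : InjOn (fun i ↦ (A i, B i)) (firstOccurrences A B) := by
  intro s hs t ht hst
  by_contra hne
  rcases lt_or_gt_of_ne hne with hlt | hlt
  · exact ht s hlt hst
  · exact hs t hlt hst.symm

theorem small_firstOccurrences : Small.{u} (firstOccurrences A B) :=
  small_of_injective (injOn_firstOccurrences A B).injective

variable [WellFoundedLT ι]

theorem iUnion_firstOccurrences {Z : Type*} (G : Set X → Set X → Set Z) :
    ⋃ t : firstOccurrences A B, G (A t) (B t) = ⋃ i, G (A i) (B i) := by
  refine Subset.antisymm (iUnion_subset fun t ↦ subset_iUnion (fun i ↦ G (A i) (B i)) t) ?_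
  refine iUnion_subset fun i ↦ ?_
  obtain ⟨t, ht, -, hA, hB⟩ := exists_mem_firstOccurrences_le A B i
  rw [← hA, ← hB]
  exact subset_iUnion (fun t : firstOccurrences A B ↦ G (A t) (B t)) ⟨t, ht⟩

variable {A B}

theorem isSuccLimit_coe_of_mem_firstOccurrences (hA : Monotone A) (hB : Monotone B)
    {t : firstOccurrences A B} (ht : IsSuccLimit t) : IsSuccLimit (t : ι) := by
  refine ⟨fun hmin ↦ ht.not_isMin fun s hs ↦ hmin hs, fun j hjt ↦ ?_⟩
  obtain ⟨k, hk, hkj, hAk, hBk⟩ := exists_mem_firstOccurrences_le A B j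
  obtain ⟨m, hkm, hmt⟩ := (not_covBy_iff (show (⟨k, hk⟩ : firstOccurrences A B) < t from
    hkj.trans_lt hjt.lt)).1 (ht.isSuccPrelimit ⟨k, hk⟩)
  have hmj : (m : ι) ≤ j := hjt.le_of_lt hmt
  refine m.2 k hkm (Prod.ext ?_ ?_)
  · exact (hA hkm.le).antisymm (hAk ▸ hA hmj)
  · exact (hB hkm.le).antisymm (hBk ▸ hB hmj)

end FirstOccurrences

section OccupiedChain

variable {X : Type u} [TopologicalSpace X] {ι : Type w}

structure IsOccupiedChain [Preorder ι] (A B : ι → Set X) : Prop where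
  isClosed_left : ∀ i, IsClosed (A i)
  isClosed_right : ∀ i, IsClosed (B i)
  monotone_left : Monotone A
  monotone_right : Monotone B
  le : A ≤ B
  subset_iUnion_of_isSuccLimit : ∀ i, IsSuccLimit i → A i ⊆ ⋃ j < i, B j

theorem IsOccupiedChain.preimage [Preorder ι] {Z : Type*} [TopologicalSpace Z] {f : Z → X}
    (hf : Continuous f) {A B : ι → Set X} (h : IsOccupiedChain A B) :
    IsOccupiedChain (fun i ↦ f ⁻¹' A i) (fun i ↦ f ⁻¹' B i) where
  isClosed_left i := (h.isClosed_left i).preimage hf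
  isClosed_right i := (h.isClosed_right i).preimage hf
  monotone_left _ _ hij := preimage_mono (h.monotone_left hij)
  monotone_right _ _ hij := preimage_mono (h.monotone_right hij)
  le i := preimage_mono (h.le i)
  subset_iUnion_of_isSuccLimit i hi := by
    simpa only [preimage_iUnion] using preimage_mono (h.subset_iUnion_of_isSuccLimit i hi)

theorem IsOccupiedChain.restrict_firstOccurrences [LinearOrder ι] [WellFoundedLT ι]
    {A B : ι → Set X} (h : IsOccupiedChain A B) :
    IsOccupiedChain (fun t : firstOccurrences A B ↦ A t) (fun t ↦ B t) where
  isClosed_left t := h.isClosed_left t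
  isClosed_right t := h.isClosed_right t
  monotone_left _ _ hst := h.monotone_left hst
  monotone_right _ _ hst := h.monotone_right hst
  le t := h.le t
  subset_iUnion_of_isSuccLimit t ht x hx := by
    obtain ⟨j, hjt, hxj⟩ := mem_iUnion₂.1 (h.subset_iUnion_of_isSuccLimit t
      (isSuccLimit_coe_of_mem_firstOccurrences h.monotone_left h.monotone_right ht) hx)
    obtain ⟨k, hk, hkj, -, hBk⟩ := exists_mem_firstOccurrences_le A B j
    exact mem_iUnion₂.2 ⟨⟨k, hk⟩, hkj.trans_lt hjt, hBk ▸ hxj⟩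

theorem isOccupiedChain_Iio {J : Type w} [LinearOrder J] {a : J} {A B : J → Set X}
    (hAc : ∀ j < a, IsClosed (A j)) (hBc : ∀ j < a, IsClosed (B j))
    (hAm : ∀ i j, i ≤ j → j < a → A i ⊆ A j) (hBm : ∀ i j, i ≤ j → j < a → B i ⊆ B j)
    (hAB : ∀ j < a, A j ⊆ B j)
    (hlim : ∀ j, IsSuccLimit j → j < a → A j ⊆ ⋃ i ∈ Iio j, B i) :
    IsOccupiedChain (fun j : Iio a ↦ A j) (fun j ↦ B j) where
  isClosed_left j := hAc j j.2
  isClosed_right j := hBc j j.2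
  monotone_left i j hij := hAm i j hij j.2
  monotone_right i j hij := hBm i j hij j.2
  le j := hAB j j.2
  subset_iUnion_of_isSuccLimit j hj x hx := by
    have hj' : IsSuccLimit (j : J) :=
      (PrincipalSeg.ofElement (· < ·) a : Iio a <i J).isSuccLimit_apply_iff.2 hj
    obtain ⟨i, hij, hxi⟩ := mem_iUnion₂.1 (hlim j hj' j.2 hx)
    exact mem_iUnion₂.2 ⟨⟨i, (mem_Iio.1 hij).trans j.2⟩, hij, hxi⟩

theorem StronglyBaire.interior_iUnion_subset_of_principalSeg (hX : StronglyBaire X)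
    [LinearOrder ι] (e : ι <i Ordinal.{u}) {A B : ι → Set X} (h : IsOccupiedChain A B) :
    interior (⋃ i, A i) ⊆ closure (⋃ i, interior (B i)) := by
  have hrange : ∀ ξ < e.top, ∃ i, e i = ξ := fun ξ hξ ↦ by
    rwa [← mem_range, e.range_eq_Iio]
  have hunion : ∀ G : Ordinal.{u} → Set X, ⋃ ξ ∈ Iio e.top, G ξ = ⋃ i, G (e i) := fun G ↦ by
    rw [← e.range_eq_Iio, biUnion_range]
  have hext : ∀ (F : ι → Set X) i, Function.extend e F (fun _ ↦ ∅) (e i) = F i :=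
    fun F ↦ e.injective.extend_apply F _
  have := hX e.top (Function.extend e A fun _ ↦ ∅) (Function.extend e B fun _ ↦ ∅)
    (fun ξ hξ ↦ by obtain ⟨i, rfl⟩ := hrange ξ hξ; simpa only [hext] using h.isClosed_left i)
    (fun ξ hξ ↦ by obtain ⟨i, rfl⟩ := hrange ξ hξ; simpa only [hext] using h.isClosed_right i)
    (fun ξ η hξη hη ↦ by
      obtain ⟨j, rfl⟩ := hrange η hη
      obtain ⟨i, rfl⟩ := hrange ξ (hξη.trans_lt hη)
      simpa only [hext] using h.monotone_left (e.le_iff_le.1 hξη))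
    (fun ξ η hξη hη ↦ by
      obtain ⟨j, rfl⟩ := hrange η hη
      obtain ⟨i, rfl⟩ := hrange ξ (hξη.trans_lt hη)
      simpa only [hext] using h.monotone_right (e.le_iff_le.1 hξη))
    (fun ξ hξ ↦ by obtain ⟨i, rfl⟩ := hrange ξ hξ; simpa only [hext] using h.le i)
    (fun β hβ hβe x hx ↦ by
      obtain ⟨i, rfl⟩ := hrange β hβe
      rw [hext] at hx
      obtain ⟨j, hji, hxj⟩ :=
        mem_iUnion₂.1 (h.subset_iUnion_of_isSuccLimit i (e.isSuccLimit_apply_iff.1 hβ) hx)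
      exact mem_iUnion₂.2 ⟨e j, e.lt_iff_lt.2 hji, by rwa [hext]⟩)
  simpa only [hunion, hext] using this

theorem StronglyBaire.interior_iUnion_subset (hX : StronglyBaire X) [LinearOrder ι]
    [WellFoundedLT ι] {A B : ι → Set X} (h : IsOccupiedChain A B) :
    interior (⋃ i, A i) ⊆ closure (⋃ i, interior (B i)) := by
  have : Small.{u} (firstOccurrences A B) := small_firstOccurrences A B
  have e : firstOccurrences A B <i Ordinal.{u} :=
    .relIsoTrans (orderIsoShrink _).toRelIsoLT (Ordinal.typein (· < ·))
  have := hX.interior_iUnion_subset_of_principalSeg e h.restrict_firstOccurrences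
  rwa [iUnion_firstOccurrences A B fun a _ ↦ a,
    iUnion_firstOccurrences A B fun _ b ↦ interior b] at this

end OccupiedChain

section NowhereDensePreimages

variable {X : Type u} {Y : Type v} [TopologicalSpace X] [TopologicalSpace Y] {f : X → Y}

theorem interior_preimage_subset_closure_preimage_interior
    (hf : ∀ s : Set Y, IsNowhereDense s → IsNowhereDense (f ⁻¹' s)) {B : Set Y}
    (hB : IsClosed B) : interior (f ⁻¹' B) ⊆ closure (f ⁻¹' interior B) := by
  have hN : interior (closure (f ⁻¹' frontier B)) = ∅ :=
    hf _ (isClosed_frontier.isNowhereDense_iff.2 (interior_frontier hB))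
  have hsub : interior (f ⁻¹' B) \ closure (f ⁻¹' interior B) ⊆
      interior (closure (f ⁻¹' frontier B)) := by
    refine interior_maximal (fun x hx ↦ subset_closure ?_) (isOpen_interior.sdiff isClosed_closure)
    rw [mem_preimage, hB.frontier_eq]
    exact ⟨interior_subset (s := f ⁻¹' B) hx.1, fun hint ↦ hx.2 (subset_closure hint)⟩
  rwa [hN, subset_empty_iff, sdiff_eq_empty] at hsub

theorem interior_subset_closure_of_preimage (hf : Continuous f) (hsurj : Function.Surjective f)
    {U V : Set Y} (h : interior (f ⁻¹' U) ⊆ closure (f ⁻¹' V)) : interior U ⊆ closure V := by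
  intro y hy
  obtain ⟨x, rfl⟩ := hsurj y
  have hx : x ∈ closure (f ⁻¹' V) := h (preimage_interior_subset_interior_preimage hf hy)
  exact closure_mono (image_preimage_subset f V)
    (image_closure_subset_closure_image hf ⟨x, hx, rfl⟩)

end NowhereDensePreimages

/-- The image of a strongly Baire space under a continuous surjection pulling back
nowhere dense sets to nowhere dense sets is strongly Baire. -/
theorem stronglyBaire_image (X : Type u) (Y : Type v) [TopologicalSpace X]
    [TopologicalSpace Y] (hX : StronglyBaire X) (f : X → Y) (hf : Continuous f)
    (hsurj : Function.Surjective f)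
    (hnwd : ∀ B : Set Y, IsNowhereDense B → IsNowhereDense (f ⁻¹' B)) :
    StronglyBaire' Y := by
  intro α A B hAc hBc hAm hBm hAB hlim
  have hpullback := hX.interior_iUnion_subset
    ((isOccupiedChain_Iio hAc hBc hAm hBm hAB hlim).preimage hf)
  refine interior_subset_closure_of_preimage hf hsurj ?_
  rw [biUnion_eq_iUnion, biUnion_eq_iUnion, preimage_iUnion, preimage_iUnion]
  refine hpullback.trans (closure_minimal (iUnion_subset fun ξ ↦ ?_) isClosed_closure)
  exact (interior_preimage_subset_closure_preimage_interior hnwd (hBc ξ ξ.2)).trans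
    (closure_mono (subset_iUnion (fun ξ : Iio α ↦ f ⁻¹' interior (B ξ)) ξ))
end

section
/- Every strongly Baire space is a Baire space. -/
/-!
Given open dense sets `U n`, the finite unions `⋃ k ≤ n, (U k)ᶜ` form an increasing sequence of
closed sets with empty interior. Indexing it by the ordinals below `ω` and taking `B = A`
(occupation is vacuous, as there is no limit ordinal below `ω`), the strong Baire property puts
the interior of `⋃ n, (U n)ᶜ` inside the closure of `∅`, so `⋂ n, U n` is dense.
-/

universe u

open Set
open scoped Ordinal

theorem Ordinal.biUnion_Iio_omega0 {β : Type*} (g : Ordinal.{u} → Set β) :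
    ⋃ ξ ∈ Iio ω, g ξ = ⋃ n : ℕ, g n := by
  have hIio : Iio ω = range ((↑) : ℕ → Ordinal.{u}) :=
    ext fun _ => by simp [Ordinal.lt_omega0, eq_comm]
  rw [hIio, biUnion_range]

section

variable {X : Type*} [TopologicalSpace X]

theorem isClosed_accumulate {F : ℕ → Set X} (hc : ∀ n, IsClosed (F n)) (n : ℕ) :
    IsClosed (accumulate F n) := by
  rw [accumulate_def]
  exact (finite_le_nat n).isClosed_biUnion fun k _ => hc k

theorem interior_accumulate_eq_empty {F : ℕ → Set X} (hc : ∀ n, IsClosed (F n))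
    (hi : ∀ n, interior (F n) = ∅) (n : ℕ) : interior (accumulate F n) = ∅ := by
  induction n with
  | zero => rw [accumulate_zero_nat]; exact hi 0
  | succ n ih =>
    rw [accumulate_succ, interior_union_isClosed_of_interior_empty (isClosed_accumulate hc n)
      (hi (n + 1)), ih]

theorem BaireSpace.of_interior_iUnion_eq_empty
    (H : ∀ F : ℕ → Set X, (∀ n, IsClosed (F n)) → Monotone F → (∀ n, interior (F n) = ∅) →
      interior (⋃ n, F n) = ∅) :
    BaireSpace X := by
  refine ⟨fun U hopen hdense => ?_⟩
  have hc (n : ℕ) : IsClosed (U n)ᶜ := (hopen n).isClosed_compl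
  have hi (n : ℕ) : interior (U n)ᶜ = ∅ := by
    rw [interior_compl, compl_empty_iff, (hdense n).closure_eq]
  have := H _ (isClosed_accumulate hc) monotone_accumulate (interior_accumulate_eq_empty hc hi)
  rwa [iUnion_accumulate, ← compl_iInter, interior_compl, compl_empty_iff,
    ← dense_iff_closure_eq] at this

end

theorem StronglyBaire.interior_iUnion_subset_closure_iUnion_interior {X : Type u}
    [TopologicalSpace X] (h : StronglyBaire X) {F : ℕ → Set X} (hc : ∀ n, IsClosed (F n))
    (hF : Monotone F) : interior (⋃ n, F n) ⊆ closure (⋃ n, interior (F n)) := by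
  -- An extension of `F` to all ordinals that is monotone by construction.
  set A : Ordinal.{u} → Set X := fun ξ => ⋃ (n : ℕ) (_ : (n : Ordinal) ≤ ξ), F n
  have hA (m : ℕ) : A m = F m :=
    (iUnion₂_subset fun n hn => hF (mod_cast hn)).antisymm
      (subset_iUnion₂_of_subset m le_rfl subset_rfl)
  have hAmono (ξ η : Ordinal.{u}) (hle : ξ ≤ η) : A ξ ⊆ A η :=
    biUnion_mono (fun _ hn => le_trans hn hle) fun _ _ => subset_rfl
  have hAclosed (ξ : Ordinal.{u}) (hξ : ξ < ω) : IsClosed (A ξ) := by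
    obtain ⟨n, rfl⟩ := Ordinal.lt_omega0.mp hξ
    exact hA n ▸ hc n
  have key := h ω A A hAclosed hAclosed (fun ξ η hle _ => hAmono ξ η hle)
    (fun ξ η hle _ => hAmono ξ η hle) (fun _ _ => subset_rfl)
    fun β hβ hβω => absurd (Ordinal.omega0_le_of_isSuccLimit hβ) hβω.not_ge
  simpa only [Ordinal.biUnion_Iio_omega0, hA] using key

/-- Every strongly Baire space is a Baire space. -/
theorem baireSpace_of_stronglyBaire (X : Type u) [TopologicalSpace X]
    (h : StronglyBaire X) : BaireSpace X :=
  BaireSpace.of_interior_iUnion_eq_empty fun _ hc hF hi => by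
    simpa [hi] using h.interior_iUnion_subset_closure_iUnion_interior hc hF
end

section
/- Let Y be a compact Hausdorff space such that for every subset B ⊆ Y with |B| ≤ ℵ₁, the closure of B is metrizable. Then Y is metrizable. -/
/-!
If `Y` were not separable, transfinite recursion would give points `f α`, `α < ω₁`, each outside
the closure of its predecessors. Their set `T` has at most `ℵ₁` elements, so `closure T` is compact
metrizable, hence second countable, and `T` has a countable dense subset. Since `ω₁` has
uncountable cofinality, that subset lies in an initial segment `f '' Iio β`, whose closure misses
`f β ∈ T`. So `Y` is the closure of a countable set, which is metrizable by hypothesis.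
-/

open Cardinal

universe u

open Ordinal Set TopologicalSpace

theorem Ordinal.countable_Iio_of_lt_omega_one {α : Ordinal.{u}} (hα : α < ω₁) :
    (Iio α).Countable := by
  rw [← le_aleph0_iff_set_countable, Cardinal.mk_Iio_ordinal, ← lift_aleph0.{u + 1, u},
    Cardinal.lift_le, ← lt_aleph_one_iff, ← lt_ord, ord_aleph]
  exact hα

theorem Ordinal.exists_lt_omega_one_subset_Iio {s : Set Ordinal.{u}} (hs : s.Countable)
    (hs₁ : s ⊆ Iio ω₁) : ∃ β < ω₁, s ⊆ Iio β := by
  have : Countable s := hs.to_subtype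
  have hsup : ⨆ x : s, (x : Ordinal) < ω₁ := iSup_lt_omega_one fun x => hs₁ x.2
  refine ⟨Order.succ (⨆ x : s, (x : Ordinal)), (isSuccLimit_omega 1).succ_lt hsup, fun x hx => ?_⟩
  exact Order.lt_succ_iff.mpr (Ordinal.le_iSup (fun x : s => (x : Ordinal)) ⟨x, hx⟩)

theorem Cardinal.mk_image_Iio_omega_one_le {X : Type u} (f : Ordinal.{u} → X) :
    #(f '' Iio ω₁) ≤ ℵ₁ := by
  simpa [Cardinal.mk_Iio_ordinal] using mk_image_le_lift (f := f) (s := Iio ω₁)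

section LeftSeparated

variable {X : Type u} [TopologicalSpace X]

noncomputable def leftSeparatedSeq [Nonempty X] : Ordinal.{u} → X :=
  Ordinal.lt_wf.fix fun α f =>
    Classical.epsilon fun x => x ∉ closure (range fun β : Iio α => f β β.2)

theorem leftSeparatedSeq_eq [Nonempty X] (α : Ordinal.{u}) :
    leftSeparatedSeq α =
      Classical.epsilon fun x : X => x ∉ closure (leftSeparatedSeq '' Iio α) := by
  rw [leftSeparatedSeq, WellFounded.fix_eq, image_eq_range]

theorem leftSeparatedSeq_notMem_closure [Nonempty X] {α : Ordinal.{u}}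
    (h : ¬Dense (leftSeparatedSeq '' Iio α : Set X)) :
    leftSeparatedSeq α ∉ closure (leftSeparatedSeq '' Iio α : Set X) := by
  rw [dense_iff_closure_eq, ← ne_eq, ne_univ_iff_exists_notMem] at h
  rw [leftSeparatedSeq_eq]
  exact Classical.epsilon_spec h

theorem exists_leftSeparated_of_not_separable (hX : ∀ s : Set X, s.Countable → ¬Dense s) :
    ∃ f : Ordinal.{u} → X, ∀ α < ω₁, f α ∉ closure (f '' Iio α) := by
  have : Nonempty X := not_isEmpty_iff.mp fun h =>
    hX ∅ countable_empty (by rw [← univ_eq_empty_iff.mpr h]; exact dense_univ)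
  exact ⟨leftSeparatedSeq, fun α hα =>
    leftSeparatedSeq_notMem_closure (hX _ ((countable_Iio_of_lt_omega_one hα).image _))⟩

theorem not_subset_closure_of_leftSeparated {f : Ordinal.{u} → X}
    (hf : ∀ α < ω₁, f α ∉ closure (f '' Iio α)) {c : Set X} (hcT : c ⊆ f '' Iio ω₁)
    (hc : c.Countable) : ¬f '' Iio ω₁ ⊆ closure c := by
  have hcT' : ∀ x ∈ c, ∃ α ∈ Iio ω₁, f α = x := hcT
  choose! idx hidx hfidx using hcT'
  obtain ⟨β, hβ, hidxβ⟩ :=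
    exists_lt_omega_one_subset_Iio (hc.image idx) (image_subset_iff.mpr hidx)
  have hcβ : c ⊆ f '' Iio β := fun x hx => ⟨idx x, hidxβ (mem_image_of_mem idx hx), hfidx x hx⟩
  exact fun hT => hf β hβ (closure_mono hcβ (hT (mem_image_of_mem f hβ)))

end LeftSeparated

theorem exists_countable_dense_subset_of_metrizableSpace_closure {X : Type u}
    [TopologicalSpace X] {s : Set X} [SeparableSpace (closure s)] [MetrizableSpace (closure s)] :
    ∃ c ⊆ s, c.Countable ∧ s ⊆ closure c := by
  obtain ⟨t, hts, htc, hst⟩ :=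
    (IsSeparable.of_separableSpace ((↑) ⁻¹' s : Set (closure s))).exists_countable_dense_subset
  refine ⟨(↑) '' t, by simpa [image_subset_iff] using hts, htc.image _, fun x hx => ?_⟩
  exact mem_closure_image continuous_subtype_val.continuousAt
    (hst (show (⟨x, subset_closure hx⟩ : closure s) ∈ (↑) ⁻¹' s from hx))

theorem Dense.metrizableSpace {X : Type u} [TopologicalSpace X] {s : Set X} (hs : Dense s)
    [MetrizableSpace (closure s)] : MetrizableSpace X :=
  (hs.closure_eq ▸ Homeomorph.Set.univ X).symm.isEmbedding.metrizableSpace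

theorem metrizable_of_small_closures_general (Y : Type u) [TopologicalSpace Y] [CompactSpace Y]
    (h : ∀ B : Set Y, #B ≤ Cardinal.aleph 1 → TopologicalSpace.MetrizableSpace (closure B)) :
    TopologicalSpace.MetrizableSpace Y := by
  obtain ⟨D, hDc, hD⟩ : ∃ D : Set Y, D.Countable ∧ Dense D := by
    by_contra! hY
    obtain ⟨f, hf⟩ := exists_leftSeparated_of_not_separable hY
    have := h _ (mk_image_Iio_omega_one_le f)
    have : CompactSpace (closure (f '' Iio ω₁)) :=
      isCompact_iff_compactSpace.mp isClosed_closure.isCompact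
    obtain ⟨c, hcT, hc, hTc⟩ :=
      exists_countable_dense_subset_of_metrizableSpace_closure (s := f '' Iio ω₁)
    exact not_subset_closure_of_leftSeparated hf hcT hc hTc
  have := h D ((le_aleph0_iff_set_countable.mpr hDc).trans (aleph0_le_aleph 1))
  exact hD.metrizableSpace

/-- A compact Hausdorff space all of whose subsets of cardinality at most `ℵ₁` have
metrizable closure is metrizable. -/
theorem metrizable_of_small_closures (Y : Type u) [TopologicalSpace Y] [CompactSpace Y]
    [T2Space Y]
    (h : ∀ B : Set Y, #B ≤ Cardinal.aleph 1 → TopologicalSpace.MetrizableSpace (closure B)) :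
    TopologicalSpace.MetrizableSpace Y :=
  metrizable_of_small_closures_general Y h
end

section
/- Let X be a Baire space with the countable chain condition that is a Namioka space, and let Y ⊆ C_p(X) be compact. Then there exists an at most countable set A ⊆ X such that distinct elements of Y differ at some point of A; consequently Y is metrizable. -/
universe u

/-- `X` is a Namioka space: `X` is Baire and for every compact space `K` and every
separately continuous `f : X × K → ℝ` there is a dense `G_δ` set `A ⊆ X` with `A × K`
contained in the set of joint continuity points of `f`. -/
def NamiokaSpace (X : Type u) [TopologicalSpace X] : Prop :=
  BaireSpace X ∧
  ∀ (K : Type u) [TopologicalSpace K] [CompactSpace K] (f : X → K → ℝ),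
    (∀ k, Continuous fun x => f x k) → (∀ x, Continuous (f x)) →
    ∃ A : Set X, Dense A ∧ IsGδ A ∧
      ∀ a ∈ A, ∀ k : K, ContinuousAt (fun p : X × K => f p.1 p.2) (a, k)

/-- `X` has the countable chain condition. -/
def CCC (X : Type u) [TopologicalSpace X] : Prop :=
  ∀ 𝒰 : Set (Set X), (∀ U ∈ 𝒰, IsOpen U ∧ U.Nonempty) →
    𝒰.PairwiseDisjoint id → 𝒰.Countable

/-! By the Namioka property the family `Y` is equicontinuous at the points of a dense set, so
every nonempty open set contains a nonempty open set on which all `y ∈ Y` oscillate by less than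
`ε`. A maximal disjoint family of such sets is countable by the chain condition and has dense
union; one point from each member gives a countable set on which agreement of two elements of
`Y` forces them to be `2ε`-close everywhere. The union of these sets over `ε = 1/(n+1)` separates
`Y`, and a compact space separated by countably many continuous real functions is metrizable. -/

open Filter Topology Set

theorem equicontinuousAt_of_forall_continuousAt {X K E : Type*} [TopologicalSpace X]
    [TopologicalSpace K] [CompactSpace K] [UniformSpace E] {F : K → X → E} {a : X}
    (hF : ∀ k, ContinuousAt (fun p : X × K => F p.2 p.1) (a, k)) :
    EquicontinuousAt F a := by
  intro U hU
  obtain ⟨V, hV, hVsymm, hVU⟩ := comp_symm_of_uniformity hU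
  have near_fibre : ∀ k, ∀ᶠ p in 𝓝 (a, k), (F p.2 a, F p.2 p.1) ∈ U := by
    intro k
    have near : ∀ᶠ p in 𝓝 (a, k), (F k a, F p.2 p.1) ∈ V := hF k (mem_nhds_left _ hV)
    have to_fibre : Tendsto (fun p : X × K => (a, p.2)) (𝓝 (a, k)) (𝓝 (a, k)) :=
      (continuous_const.prodMk continuous_snd).tendsto (a, k)
    filter_upwards [near, to_fibre.eventually near] with p h h'
    exact hVU (SetRel.prodMk_mem_comp (hVsymm h') h)
  exact (isCompact_univ.eventually_forall_of_forall_eventually fun k _ => near_fibre k).mono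
    fun x hx k => hx k (mem_univ k)

theorem NamiokaSpace.dense_equicontinuousAt {X : Type u} [TopologicalSpace X]
    (hX : NamiokaSpace X) {K : Type u} [TopologicalSpace K] [CompactSpace K] {F : K → X → ℝ}
    (hF : ∀ k, Continuous (F k)) (hFx : ∀ x, Continuous fun k => F k x) :
    Dense {a | EquicontinuousAt F a} := by
  obtain ⟨A, hA, -, hcont⟩ := hX.2 K (fun x k => F k x) hF hFx
  exact hA.mono fun a ha => equicontinuousAt_of_forall_continuousAt (hcont a ha)

namespace CCC

variable {X : Type*} [TopologicalSpace X]

theorem exists_countable_dense_sUnion (hX : CCC X) {P : Set X → Prop}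
    (hP : ∀ O, IsOpen O → O.Nonempty → ∃ U ⊆ O, IsOpen U ∧ U.Nonempty ∧ P U) :
    ∃ 𝒰 : Set (Set X), 𝒰.Countable ∧ (∀ U ∈ 𝒰, U.Nonempty ∧ P U) ∧ Dense (⋃₀ 𝒰) := by
  let S : Set (Set (Set X)) :=
    {𝒰 | (∀ U ∈ 𝒰, IsOpen U ∧ U.Nonempty ∧ P U) ∧ 𝒰.PairwiseDisjoint id}
  obtain ⟨𝒰, ⟨h𝒰, hdisj⟩, hmax⟩ : ∃ 𝒰, Maximal (· ∈ S) 𝒰 := by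
    refine zorn_subset S fun c hcS hc => ⟨⋃₀ c, ⟨?_, ?_⟩, fun _ => subset_sUnion_of_mem⟩
    · rintro U ⟨𝒱, h𝒱, hU⟩
      exact (hcS h𝒱).1 U hU
    · exact (hc.pairwiseDisjoint_sUnion id).2 fun 𝒱 h𝒱 => (hcS h𝒱).2
  refine ⟨𝒰, hX 𝒰 (fun U hU => ⟨(h𝒰 U hU).1, (h𝒰 U hU).2.1⟩) hdisj,
    fun U hU => (h𝒰 U hU).2, dense_iff_inter_open.2 fun O hO hOne => ?_⟩
  by_contra hempty
  rw [not_nonempty_iff_eq_empty, ← disjoint_iff_inter_eq_empty] at hempty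
  obtain ⟨U, hUO, hU, hUne, hPU⟩ := hP O hO hOne
  have hins : insert U 𝒰 ∈ S := by
    refine ⟨forall_mem_insert.2 ⟨⟨hU, hUne, hPU⟩, h𝒰⟩, hdisj.insert fun V hV _ => ?_⟩
    exact (hempty.mono_left hUO).mono_right (subset_sUnion_of_mem hV)
  have hU𝒰 : U ∈ 𝒰 := hmax hins (subset_insert _ _) (mem_insert _ _)
  exact hUne.ne_empty (disjoint_self.1 (hempty.mono hUO (subset_sUnion_of_mem hU𝒰)))

variable {ι α : Type*}

theorem exists_countable_forall_dist_le [PseudoMetricSpace α] (hX : CCC X) {F : ι → X → α}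
    (hF : ∀ i, Continuous (F i)) (hD : Dense {a | EquicontinuousAt F a}) {ε : ℝ} (hε : 0 < ε) :
    ∃ B : Set X, B.Countable ∧ ∀ i j, EqOn (F i) (F j) B → ∀ x, dist (F i x) (F j x) ≤ ε := by
  let P : Set X → Prop := fun U => ∀ x ∈ U, ∀ x' ∈ U, ∀ i, dist (F i x) (F i x') < ε / 2
  have hP : ∀ O, IsOpen O → O.Nonempty → ∃ U ⊆ O, IsOpen U ∧ U.Nonempty ∧ P U := by
    intro O hO hOne
    obtain ⟨a, haO, ha⟩ := hD.inter_open_nonempty O hO hOne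
    obtain ⟨V, hV, hVP⟩ := Metric.equicontinuousAt_iff_pair.1 ha (ε / 2) (half_pos hε)
    exact ⟨O ∩ interior V, inter_subset_left, hO.inter isOpen_interior,
      ⟨a, haO, mem_interior_iff_mem_nhds.2 hV⟩,
      fun x hx x' hx' => hVP x (interior_subset hx.2) x' (interior_subset hx'.2)⟩
  obtain ⟨𝒰, h𝒰c, h𝒰, hdense⟩ := hX.exists_countable_dense_sUnion hP
  choose pt hpt using fun U : 𝒰 => (h𝒰 U U.2).1
  have : Countable 𝒰 := h𝒰c.to_subtype
  refine ⟨range pt, countable_range pt, fun i j hij => hdense.induction ?_ ?_⟩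
  · rintro z ⟨U, hU, hzU⟩
    have hp := hpt ⟨U, hU⟩
    calc dist (F i z) (F j z)
        ≤ dist (F i z) (F i (pt ⟨U, hU⟩)) + dist (F i (pt ⟨U, hU⟩)) (F j z) := dist_triangle ..
      _ = dist (F i z) (F i (pt ⟨U, hU⟩)) + dist (F j (pt ⟨U, hU⟩)) (F j z) := by
        rw [hij (mem_range_self _)]
      _ ≤ ε / 2 + ε / 2 :=
        add_le_add ((h𝒰 U hU).2 z hzU _ hp i).le ((h𝒰 U hU).2 _ hp z hzU j).le
      _ = ε := add_halves ε
  · exact isClosed_le ((hF i).dist (hF j)) continuous_const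

theorem exists_countable_eqOn_imp_eq [MetricSpace α] (hX : CCC X) {F : ι → X → α}
    (hF : ∀ i, Continuous (F i)) (hD : Dense {a | EquicontinuousAt F a}) :
    ∃ B : Set X, B.Countable ∧ ∀ i j, EqOn (F i) (F j) B → F i = F j := by
  choose B hBc hB using fun n : ℕ =>
    hX.exists_countable_forall_dist_le hF hD (Nat.one_div_pos_of_nat (n := n))
  refine ⟨⋃ n, B n, countable_iUnion hBc, fun i j hij => funext fun x => ?_⟩
  refine dist_le_zero.1 (ge_of_tendsto' tendsto_one_div_add_atTop_nhds_zero_nat fun n => ?_)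
  exact hB n i j (hij.mono (subset_iUnion B n)) x

end CCC

theorem metrizable_compact_subset_Cp_general (X : Type u) [TopologicalSpace X]
    (hccc : CCC X) (hN : NamiokaSpace X) (Y : Set (X → ℝ))
    (hYcont : ∀ f ∈ Y, Continuous f) (hYcomp : IsCompact Y) :
    (∃ A : Set X, A.Countable ∧
      ∀ y ∈ Y, ∀ y' ∈ Y, y ≠ y' → ∃ a ∈ A, y a ≠ y' a)
    ∧ TopologicalSpace.MetrizableSpace Y := by
  have : CompactSpace Y := isCompact_iff_compactSpace.1 hYcomp
  have hD : Dense {a | EquicontinuousAt (fun y : Y => (y : X → ℝ)) a} :=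
    hN.dense_equicontinuousAt (fun y => hYcont y y.2)
      fun x => (continuous_apply x).comp continuous_subtype_val
  obtain ⟨A, hAc, hA⟩ := hccc.exists_countable_eqOn_imp_eq (F := fun y : Y => (y : X → ℝ))
    (fun y => hYcont y y.2) hD
  have hsep : ∀ y ∈ Y, ∀ y' ∈ Y, y ≠ y' → ∃ a ∈ A, y a ≠ y' a := by
    intro y hy y' hy' hne
    by_contra! hagree
    exact hne (hA ⟨y, hy⟩ ⟨y', hy'⟩ hagree)
  refine ⟨⟨A, hAc, hsep⟩, ?_⟩
  have : Encodable A := hAc.toEncodable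
  exact Metric.PiNatEmbed.TopologicalSpace.MetrizableSpace.of_countable_separating
    (fun (a : A) (y : Y) => (y : X → ℝ) a)
    (fun a => (continuous_apply (a : X)).comp continuous_subtype_val)
    fun y y' hne => by simpa using hsep y y.2 y' y'.2 (Subtype.coe_ne_coe.2 hne)

/-- For a Namioka Baire space `X` with the countable chain condition and a compact
`Y ⊆ C_p(X)`, there is a countable `A ⊆ X` separating the points of `Y`; consequently
`Y` is metrizable. -/
theorem metrizable_compact_subset_Cp (X : Type u) [TopologicalSpace X] [BaireSpace X]
    (hccc : CCC X) (hN : NamiokaSpace X) (Y : Set (X → ℝ))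
    (hYcont : ∀ f ∈ Y, Continuous f) (hYcomp : IsCompact Y) :
    (∃ A : Set X, A.Countable ∧
      ∀ y ∈ Y, ∀ y' ∈ Y, y ≠ y' → ∃ a ∈ A, y a ≠ y' a)
    ∧ TopologicalSpace.MetrizableSpace Y :=
  metrizable_compact_subset_Cp_general X hccc hN Y hYcont hYcomp
end

section
/- Let Y ⊆ ℝ^T be compact (with the product topology), Z a metric space, f : Y → Z continuous, ε ≥ 0, and S ⊆ T a set such that dist(f(y'), f(y'')) ≤ ε whenever y', y'' ∈ Y satisfy y'|_S = y''|_S. Then for every ε' > ε there exist a finite set S₀ ⊆ S and δ > 0 such that dist(f(y'), f(y'')) ≤ ε' for all y', y'' ∈ Y with |y'(s) − y''(s)| < δ for every s ∈ S₀. -/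
universe u v

/-! If `f y'` and `f y''` are more than `ε` apart, then `y'` and `y''` differ at some coordinate
in `S`. The pairs of points of `Y` whose images are at least `ε'` apart form a compact set, and
the open sets `{(y', y'') | 1 / (n + 1) < |y' s - y'' s|}` with `s ∈ S`, `n ∈ ℕ` cover it; a
finite subcover yields both the finite set of coordinates and the uniform `δ`. -/

open Set

theorem IsCompact.exists_finset_pos_forall_exists_le {X : Type*} [TopologicalSpace X]
    {ι : Type*} {K : Set X} (hK : IsCompact K) (S : Set ι) {g : ι → X → ℝ}
    (hg : ∀ i ∈ S, LowerSemicontinuous (g i)) (hpos : ∀ x ∈ K, ∃ i ∈ S, 0 < g i x) :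
    ∃ I₀ : Finset ι, ↑I₀ ⊆ S ∧ ∃ δ : ℝ, 0 < δ ∧ ∀ x ∈ K, ∃ i ∈ I₀, δ ≤ g i x := by
  let U : S × ℕ → Set X := fun p => g p.1 ⁻¹' Ioi (1 / (p.2 + 1))
  have hUo : ∀ p, IsOpen (U p) := fun p => (hg p.1 p.1.2).isOpen_preimage _
  have hKU : K ⊆ ⋃ p, U p := by
    intro x hx
    obtain ⟨i, hi, hgi⟩ := hpos x hx
    obtain ⟨n, hn⟩ := exists_nat_one_div_lt hgi
    exact mem_iUnion.2 ⟨(⟨i, hi⟩, n), hn⟩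
  obtain ⟨t, ht⟩ := hK.elim_finite_subcover U hUo hKU
  classical
  have htS : ↑(t.image fun p => p.1.1) ⊆ S := by
    rw [Finset.coe_image]
    rintro _ ⟨p, -, rfl⟩
    exact p.1.2
  refine ⟨t.image fun p => p.1.1, htS, 1 / (t.sup Prod.snd + 1), by positivity, fun x hx => ?_⟩
  obtain ⟨p, hp, hxp⟩ := mem_iUnion₂.1 (ht hx)
  refine ⟨p.1, Finset.mem_image_of_mem _ hp, le_of_lt (lt_of_le_of_lt ?_ hxp)⟩
  gcongr
  exact_mod_cast Finset.le_sup (f := Prod.snd) hp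

theorem dependence_finitely_many_coordinates_general {T : Type u} (Y : Set (T → ℝ))
    (hY : IsCompact Y) {Z : Type v} [MetricSpace Z] (f : (T → ℝ) → Z)
    (hf : ContinuousOn f Y) (ε : ℝ) (S : Set T)
    (h : ∀ y' ∈ Y, ∀ y'' ∈ Y, (∀ s ∈ S, y' s = y'' s) → dist (f y') (f y'') ≤ ε) :
    ∀ ε' : ℝ, ε < ε' → ∃ S₀ : Finset T, ↑S₀ ⊆ S ∧ ∃ δ : ℝ, 0 < δ ∧
      ∀ y' ∈ Y, ∀ y'' ∈ Y, (∀ s ∈ S₀, |y' s - y'' s| < δ) →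
        dist (f y') (f y'') ≤ ε' := by
  intro ε' hε'
  let D : (T → ℝ) × (T → ℝ) → ℝ := fun p => dist (f p.1) (f p.2)
  have hD : ContinuousOn D (Y ×ˢ Y) :=
    continuous_dist.comp_continuousOn
      ((hf.comp continuousOn_fst fun _ hp => hp.1).prodMk
        (hf.comp continuousOn_snd fun _ hp => hp.2))
  have hK : IsCompact (Y ×ˢ Y ∩ D ⁻¹' Ici ε') :=
    hD.upperSemicontinuousOn.isCompact_inter_preimage_Ici (hY.prod hY) ε'
  have hsep : ∀ p ∈ Y ×ˢ Y ∩ D ⁻¹' Ici ε', ∃ s ∈ S, 0 < |p.1 s - p.2 s| := by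
    rintro p ⟨⟨hp₁, hp₂⟩, hfar⟩
    by_contra! hagree
    have hle := h p.1 hp₁ p.2 hp₂ fun s hs => sub_eq_zero.1 (abs_nonpos_iff.1 (hagree s hs))
    exact (hε'.trans_le hfar).not_ge hle
  have hgap (s : T) : Continuous fun p : (T → ℝ) × (T → ℝ) => |p.1 s - p.2 s| := by
    fun_prop
  obtain ⟨S₀, hS₀, δ, hδ, hbound⟩ :=
    hK.exists_finset_pos_forall_exists_le S (fun s _ => (hgap s).lowerSemicontinuous) hsep
  refine ⟨S₀, hS₀, δ, hδ, fun y' hy' y'' hy'' hclose => ?_⟩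
  by_contra! hfar
  obtain ⟨s, hs, hle⟩ := hbound (y', y'') ⟨⟨hy', hy''⟩, hfar.le⟩
  exact (hclose s hs).not_ge hle

/-- Quantitative dependence on finitely many coordinates: if `f` is continuous on a
compact `Y ⊆ ℝ^T`, `Z` is metric, and `dist (f y') (f y'') ≤ ε` whenever `y', y'' ∈ Y`
agree on `S`, then for every `ε' > ε` there are a finite `S₀ ⊆ S` and `δ > 0` such that
`dist (f y') (f y'') ≤ ε'` whenever `|y' s - y'' s| < δ` for all `s ∈ S₀`. -/
theorem dependence_finitely_many_coordinates {T : Type u} (Y : Set (T → ℝ))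
    (hY : IsCompact Y) {Z : Type v} [MetricSpace Z] (f : (T → ℝ) → Z)
    (hf : ContinuousOn f Y) (ε : ℝ) (hε : 0 ≤ ε) (S : Set T)
    (h : ∀ y' ∈ Y, ∀ y'' ∈ Y, (∀ s ∈ S, y' s = y'' s) → dist (f y') (f y'') ≤ ε) :
    ∀ ε' : ℝ, ε < ε' → ∃ S₀ : Finset T, ↑S₀ ⊆ S ∧ ∃ δ : ℝ, 0 < δ ∧
      ∀ y' ∈ Y, ∀ y'' ∈ Y, (∀ s ∈ S₀, |y' s - y'' s| < δ) →
        dist (f y') (f y'') ≤ ε' :=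
  dependence_finitely_many_coordinates_general Y hY f hf ε S h
end

section
/- Every strongly Baire space is a Namioka space. -/
universe u

/-!
Fix a separately continuous `f : X → K → ℝ` with `K` compact. Each `T ⊆ X` induces the
pseudometric `d_T(k, k') = sup_{x ∈ T} |f x k - f x k'|` on `K`, and `modulusSet f T δ σ` is the
closed set of `y` with `|f y k - f y k'| ≤ σ` whenever `d_T(k, k') ≤ δ`. By compactness of
`K × K`, a point of `modulusSet f T 0 τ` lies in `modulusSet f F δ τ'` for a finite `F ⊆ T`,
some `δ > 0` and any `τ' > τ`.

For finite `F` the Baire property, applied to the countable closed cover of an open subset of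
`modulusSet f F 0 τ` by the `modulusSet f F (1 / (n + 1)) τ'`, yields an open set on which the
family `(f x)` has uniformly small oscillation. For infinite `T`, enumerate `T` in order type
`(#T).ord`: the sets controlled by the initial segments form families to which the strong Baire
property applies (the finite witnesses above give the occupation condition at limit stages), and
this reduces `T` to its initial segments, which are smaller. Taking `T = X`, points of uniformly
small oscillation are dense; the intersection over `ε = 1 / (n + 1)` is the required dense `Gδ`.
-/

open Set Filter Topology
open scoped Cardinal Ordinal

theorem IsOpen.exists_inter_interior_nonempty {X : Type*} [TopologicalSpace X] [BaireSpace X]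
    {W : Set X} (hW : IsOpen W) (hne : W.Nonempty) {C : ℕ → Set X} (hC : ∀ n, IsClosed (C n))
    (hWC : W ⊆ ⋃ n, C n) :
    ∃ n, (W ∩ interior (C n)).Nonempty := by
  have hcover : ⋃ n, (C n ∪ Wᶜ) = univ := eq_univ_of_forall fun x => by
    by_cases hx : x ∈ W
    · obtain ⟨n, hn⟩ := mem_iUnion.1 (hWC hx)
      exact mem_iUnion.2 ⟨n, Or.inl hn⟩
    · exact mem_iUnion.2 ⟨0, Or.inr hx⟩
  obtain ⟨z, hzW, hzU⟩ := (dense_iUnion_interior_of_closed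
    (fun n => (hC n).union hW.isClosed_compl) hcover).inter_open_nonempty W hW hne
  obtain ⟨n, hn⟩ := mem_iUnion.1 hzU
  refine ⟨n, z, hzW, mem_interior.2 ⟨interior (C n ∪ Wᶜ) ∩ W,
    fun y ⟨hy, hyW⟩ => (interior_subset hy).resolve_right (not_not.2 hyW),
    isOpen_interior.inter hW, hn, hzW⟩⟩

namespace StronglyBaire

variable {X : Type u} [TopologicalSpace X]

theorem interior_iUnion_subset_closure (h : StronglyBaire X) {C : ℕ → Set X}
    (hC : ∀ n, IsClosed (C n)) (hmono : Monotone C) :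
    interior (⋃ n, C n) ⊆ closure (⋃ n, interior (C n)) := by
  set A : Ordinal.{u} → Set X := fun ξ => ⋂ (n : ℕ) (_ : ξ ≤ n), C n
  have hA : ∀ n : ℕ, A n = C n := fun n =>
    Subset.antisymm (fun x hx => mem_iInter₂.1 hx n le_rfl)
      (subset_iInter₂ fun m hm => hmono (by exact_mod_cast hm))
  have hAω : ∀ s : Set X → Set X, ⋃ ξ ∈ Iio ω, s (A ξ) = ⋃ n : ℕ, s (C n) := by
    intro s
    ext x
    simp only [mem_iUnion, mem_Iio, Ordinal.lt_omega0, exists_prop]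
    constructor
    · rintro ⟨_, ⟨n, rfl⟩, hx⟩
      exact ⟨n, hA n ▸ hx⟩
    · rintro ⟨n, hx⟩
      exact ⟨n, ⟨n, rfl⟩, (hA n).symm ▸ hx⟩
  have hAc : ∀ ξ < ω, IsClosed (A ξ) := fun ξ _ =>
    isClosed_biInter fun n _ => hC n
  have hAm : ∀ ξ η, ξ ≤ η → η < ω → A ξ ⊆ A η := fun ξ η hle _ =>
    biInter_mono (fun n hn => hle.trans hn) fun _ _ => subset_rfl
  have := h ω A A hAc hAc hAm hAm (fun _ _ => subset_rfl)
    (fun β hβ hβω => absurd (Ordinal.omega0_le_of_isSuccLimit hβ) hβω.not_ge)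
  rwa [hAω fun s => s, hAω interior] at this

theorem baireSpace (h : StronglyBaire X) : BaireSpace X := by
  refine ⟨fun o ho hd => ?_⟩
  have hC : ∀ n, IsClosed (partialSups (fun n => (o n)ᶜ) n) ∧
      interior (partialSups (fun n => (o n)ᶜ) n) = ∅ := by
    intro n
    induction n with
    | zero => simpa [interior_compl, (hd 0).closure_eq] using (ho 0).isClosed_compl
    | succ n ih =>
      rw [← Order.succ_eq_add_one, partialSups_succ]
      refine ⟨ih.1.union (ho _).isClosed_compl, ?_⟩
      refine (interior_union_isClosed_of_interior_empty ih.1 ?_).trans ih.2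
      rw [interior_compl, (hd _).closure_eq, compl_univ]
  have := h.interior_iUnion_subset_closure (fun n => (hC n).1) (partialSups _).monotone
  have hCU : ⋃ n, partialSups (fun n => (o n)ᶜ) n = (⋂ n, o n)ᶜ :=
    (iSup_partialSups_eq _).trans (compl_iInter _).symm
  simp only [(hC _).2, iUnion_empty, closure_empty, subset_empty_iff, hCU] at this
  rwa [interior_eq_empty_iff_dense_compl, compl_compl] at this

end StronglyBaire

section Oscillation

variable {X K : Type*}

def modulusSet (f : X → K → ℝ) (T : Set X) (δ σ : ℝ) : Set X :=
  {y | ∀ k k', (∀ x ∈ T, |f x k - f x k'| ≤ δ) → |f y k - f y k'| ≤ σ}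

def smallOscillationSet [TopologicalSpace X] (f : X → K → ℝ) (ε : ℝ) : Set X :=
  {w | ∃ V ∈ 𝓝 w, ∀ a ∈ V, ∀ b ∈ V, ∀ k, |f a k - f b k| ≤ ε}

variable {f : X → K → ℝ}

theorem modulusSet_mono {T T' : Set X} {δ δ' σ σ' : ℝ} (hT : T ⊆ T') (hδ : δ' ≤ δ)
    (hσ : σ ≤ σ') : modulusSet f T δ σ ⊆ modulusSet f T' δ' σ' :=
  fun _ hy k k' hkk' => (hy k k' fun x hx => (hkk' x (hT hx)).trans hδ).trans hσ

theorem exists_finset_mem_modulusSet [TopologicalSpace K] [CompactSpace K]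
    (hf : ∀ x, Continuous (f x)) {T : Set X} {τ τ' : ℝ} {y : X}
    (hy : y ∈ modulusSet f T 0 τ) (hτ : τ < τ') :
    ∃ F : Finset X, ↑F ⊆ T ∧ ∃ n : ℕ, y ∈ modulusSet f F (1 / (n + 1)) τ' := by
  classical
  have hdiff : ∀ x, Continuous fun p : K × K => |f x p.1 - f x p.2| := fun x =>
    ((hf x).comp continuous_fst).sub ((hf x).comp continuous_snd) |>.abs
  set t : T × ℕ → Set (K × K) := fun i => {p | |f i.1 p.1 - f i.1 p.2| ≤ 1 / (i.2 + 1)}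
  have hfar : IsCompact {p : K × K | τ' ≤ |f y p.1 - f y p.2|} :=
    (isClosed_le continuous_const (hdiff y)).isCompact
  obtain ⟨u, hu⟩ := hfar.elim_finite_subfamily_closed t
    (fun i => isClosed_le (hdiff i.1) continuous_const) (by
      refine eq_empty_iff_forall_notMem.2 fun p ⟨hp, hpt⟩ => hτ.not_ge (le_trans hp ?_)
      refine hy p.1 p.2 fun x hx => le_of_forall_pos_le_add fun e he => ?_
      obtain ⟨n, hn⟩ := exists_nat_one_div_lt he
      simpa using (mem_iInter.1 hpt (⟨x, hx⟩, n)).trans hn.le)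
  refine ⟨u.image (fun i => i.1.1), ?_, u.sup Prod.snd, fun k k' hkk' => ?_⟩
  · rw [Finset.coe_image, image_subset_iff]
    exact fun i _ => i.1.2
  refine not_lt.1 fun hlt => eq_empty_iff_forall_notMem.1 hu (k, k')
    ⟨hlt.le, mem_iInter₂.2 fun i hi => (hkk' _ (Finset.mem_image_of_mem _ hi)).trans ?_⟩
  gcongr
  exact_mod_cast Finset.le_sup (f := Prod.snd) hi

variable [TopologicalSpace X]

theorem isClosed_modulusSet (hf : ∀ k, Continuous fun x => f x k)
    (T : Set X) (δ σ : ℝ) : IsClosed (modulusSet f T δ σ) := by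
  simp only [modulusSet, ofPred_forall]
  exact isClosed_iInter fun k => isClosed_iInter fun k' => isClosed_iInter fun _ =>
    isClosed_le (((hf k).sub (hf k')).abs) continuous_const

theorem isOpen_smallOscillationSet (f : X → K → ℝ) (ε : ℝ) :
    IsOpen (smallOscillationSet f ε) :=
  isOpen_iff_mem_nhds.2 fun _ ⟨V, hV, hosc⟩ =>
    mem_of_superset (eventually_mem_nhds_iff.2 hV) fun _ hy => ⟨V, hy, hosc⟩

theorem smallOscillationSet_mono {ε ε' : ℝ} (h : ε ≤ ε') :
    smallOscillationSet f ε ⊆ smallOscillationSet f ε' :=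
  fun _ ⟨V, hV, hosc⟩ => ⟨V, hV, fun a ha b hb k => (hosc a ha b hb k).trans h⟩

variable [TopologicalSpace K]

theorem mem_smallOscillationSet_of_subset_modulusSet [CompactSpace K]
    (hf₁ : ∀ k, Continuous fun x => f x k) (hf₂ : ∀ x, Continuous (f x))
    {F : Finset X} {δ σ ε : ℝ} (hδ : 0 < δ) (hσ : σ < ε / 2) {w : X} {V : Set X}
    (hV : V ∈ 𝓝 w) (hVF : V ⊆ modulusSet f F δ σ) :
    w ∈ smallOscillationSet f ε := by
  have hη : 0 < ε / 4 - σ / 2 := by linarith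
  -- `C` is a finite `δ`-net of `K` for the pseudometric of `F`; near `w`, each `f · k₀` with
  -- `k₀ ∈ C` varies little, and `hVF` controls `f a k - f a k₀` for the nearest `k₀`.
  obtain ⟨C, hC⟩ := CompactSpace.elim_nhds_subcover
    (fun k₀ => {k | ∀ x ∈ F, |f x k - f x k₀| < δ}) fun k₀ =>
      (eventually_all_finset F).2 fun x _ =>
        (hf₂ x).continuousAt.eventually (Metric.ball_mem_nhds _ hδ)
  have hV' : V ∩ {y | ∀ k₀ ∈ C, |f y k₀ - f w k₀| < ε / 4 - σ / 2} ∈ 𝓝 w :=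
    inter_mem hV <| (eventually_all_finset C).2 fun k₀ _ =>
      (hf₁ k₀).continuousAt.eventually (Metric.ball_mem_nhds _ hη)
  refine ⟨_, hV', fun a ⟨haV, ha⟩ b ⟨hbV, hb⟩ k => ?_⟩
  obtain ⟨k₀, hk₀, hk⟩ := mem_iUnion₂.1 (hC.ge (mem_univ k))
  have hkk₀ : ∀ x ∈ (F : Set X), |f x k - f x k₀| ≤ δ := fun x hx => (hk x hx).le
  have h₁ := abs_le.1 (hVF haV k k₀ hkk₀)
  have h₂ := abs_le.1 (hVF hbV k k₀ hkk₀)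
  have h₃ := abs_lt.1 (ha k₀ hk₀)
  have h₄ := abs_lt.1 (hb k₀ hk₀)
  exact abs_le.2 ⟨by linarith, by linarith⟩

theorem interior_modulusSet_subset_closure_of_finset [BaireSpace X] [CompactSpace K]
    (hf₁ : ∀ k, Continuous fun x => f x k) (hf₂ : ∀ x, Continuous (f x))
    (F : Finset X) {τ ε : ℝ} (hτ : τ < ε / 2) :
    interior (modulusSet f F 0 τ) ⊆ closure (smallOscillationSet f ε) := by
  intro w hw
  refine mem_closure_iff.2 fun W hW hwW => ?_
  obtain ⟨τ', hττ', hτ'⟩ := exists_between hτ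
  have hcover : W ∩ interior (modulusSet f F 0 τ) ⊆
      ⋃ n : ℕ, modulusSet f F (1 / (n + 1)) τ' := fun y hy => by
    obtain ⟨F', hF', n, hn⟩ := exists_finset_mem_modulusSet hf₂ (interior_subset hy.2) hττ'
    exact mem_iUnion.2 ⟨n, modulusSet_mono hF' le_rfl le_rfl hn⟩
  obtain ⟨n, z, ⟨hzW, -⟩, hz⟩ := (hW.inter isOpen_interior).exists_inter_interior_nonempty
    ⟨w, hwW, hw⟩ (fun n => isClosed_modulusSet hf₁ _ _ _) hcover
  exact ⟨z, hzW, mem_smallOscillationSet_of_subset_modulusSet hf₁ hf₂ Nat.one_div_pos_of_nat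
    hτ' (isOpen_interior.mem_nhds hz) interior_subset⟩

theorem continuousAt_of_forall_mem_smallOscillationSet (hf : ∀ x, Continuous (f x)) {a : X}
    (ha : ∀ ε > 0, a ∈ smallOscillationSet f ε) (k : K) :
    ContinuousAt (fun p : X × K => f p.1 p.2) (a, k) := by
  refine Metric.tendsto_nhds.2 fun ε hε => ?_
  obtain ⟨V, hV, hosc⟩ := ha (ε / 2) (half_pos hε)
  have hk : ∀ᶠ k' in 𝓝 k, |f a k' - f a k| < ε / 2 :=
    (hf a).continuousAt.eventually (Metric.ball_mem_nhds _ (half_pos hε))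
  filter_upwards [prod_mem_nhds hV hk] with ⟨x, k'⟩ ⟨hx, hk'⟩
  have h₁ := abs_le.1 (hosc x hx a (mem_of_mem_nhds hV) k')
  have h₂ := abs_lt.1 (show |f a k' - f a k| < ε / 2 from hk')
  exact abs_lt.2 ⟨by linarith, by linarith⟩

end Oscillation

section Enumeration

variable {X : Type u}

theorem exists_image_Iio_ord_eq {T : Set X} (hT : T.Nonempty) :
    ∃ g : Ordinal.{u} → X, g '' Iio (#T).ord = T := by
  classical
  obtain ⟨e⟩ : Nonempty ((#T).ord.ToType ≃ T) := by
    rw [← Cardinal.eq, Cardinal.mk_toType, Cardinal.card_ord]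
  refine ⟨fun η => if h : η < (#T).ord then e (Ordinal.ToType.mk ⟨η, h⟩) else hT.some,
    Subset.antisymm ?_ fun x hx => ?_⟩
  · rintro _ ⟨η, hη, rfl⟩
    simp only [mem_Iio.1 hη, dif_pos, Subtype.coe_prop]
  · set y := Ordinal.ToType.mk.symm (e.symm ⟨x, hx⟩)
    refine ⟨y.1, y.2, ?_⟩
    simp only [dif_pos (mem_Iio.1 y.2)]
    change (e (Ordinal.ToType.mk y) : X) = x
    simp [y]

theorem Order.IsSuccLimit.exists_lt_finset_subset_image_Iio {ι : Type*} [LinearOrder ι]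
    [OrderBot ι] [SuccOrder ι] [NoMaxOrder ι] {β : ι} (hβ : Order.IsSuccLimit β)
    (g : ι → X) (F : Finset X) (hF : ↑F ⊆ g '' Iio β) :
    ∃ η < β, ↑F ⊆ g '' Iio η := by
  have : ∀ x ∈ F, ∃ i < β, g i = x := fun x hx => hF hx
  choose! i hiβ hgi using this
  exact ⟨Order.succ (F.sup i), hβ.succ_lt ((Finset.sup_lt_iff hβ.bot_lt).2 hiβ),
    fun x hx => ⟨i x, Order.lt_succ_of_le (Finset.le_sup hx), hgi x hx⟩⟩

theorem mk_image_Iic_lt_of_lt_ord {c : Cardinal.{u}} (hc : ℵ₀ ≤ c)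
    (g : Ordinal.{u} → X) {ξ : Ordinal.{u}} (hξ : ξ < c.ord) : #(g '' Iic ξ) < c := by
  have hsucc : (Order.succ ξ).card < c :=
    Cardinal.lt_ord.1 ((Cardinal.isSuccLimit_ord hc).succ_lt hξ)
  have := Cardinal.mk_image_le_lift (f := g) (s := Iio (Order.succ ξ))
  rw [Cardinal.mk_Iio_ordinal, Cardinal.lift_lift, Cardinal.lift_le] at this
  rw [← Order.Iio_succ]
  exact this.trans_lt hsucc

end Enumeration

namespace StronglyBaire

variable {X : Type u} {K : Type*} [TopologicalSpace X] [TopologicalSpace K] [CompactSpace K]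
  {f : X → K → ℝ}

theorem interior_modulusSet_subset_closure_iUnion (h : StronglyBaire X)
    (hf₁ : ∀ k, Continuous fun x => f x k) (hf₂ : ∀ x, Continuous (f x)) {α : Ordinal.{u}}
    (hα : Order.IsSuccLimit α) (g : Ordinal.{u} → X) {τ τ' : ℝ} (hτ : τ < τ') :
    interior (modulusSet f (g '' Iio α) 0 τ) ⊆
      closure (⋃ ξ ∈ Iio α, interior (modulusSet f (g '' Iic ξ) 0 τ')) := by
  obtain ⟨τ₂, hτ₂, hτ₂'⟩ := exists_between hτ
  have hcover : ∀ {β : Ordinal.{u}}, Order.IsSuccLimit β → ∀ {σ σ' : ℝ}, σ < σ' →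
      modulusSet f (g '' Iio β) 0 σ ⊆ ⋃ η ∈ Iio β, modulusSet f (g '' Iio η) 0 σ' := by
    intro β hβ σ σ' hσ y hy
    obtain ⟨F, hF, n, hn⟩ := exists_finset_mem_modulusSet hf₂ hy hσ
    obtain ⟨η, hη, hFη⟩ := hβ.exists_lt_finset_subset_image_Iio g F hF
    exact mem_iUnion₂.2 ⟨η, hη, modulusSet_mono hFη Nat.one_div_pos_of_nat.le le_rfl hn⟩
  refine (interior_mono (hcover hα hτ₂)).trans <| h α
    (fun ξ => modulusSet f (g '' Iio ξ) 0 τ₂) (fun ξ => modulusSet f (g '' Iic ξ) 0 τ')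
    (fun _ _ => isClosed_modulusSet hf₁ _ _ _) (fun _ _ => isClosed_modulusSet hf₁ _ _ _)
    (fun _ _ hle _ => modulusSet_mono (image_mono (Iio_subset_Iio hle)) le_rfl le_rfl)
    (fun _ _ hle _ => modulusSet_mono (image_mono (Iic_subset_Iic.2 hle)) le_rfl le_rfl)
    (fun _ _ => modulusSet_mono (image_mono Iio_subset_Iic_self) le_rfl hτ₂'.le)
    fun β hβ _ => (hcover hβ hτ₂').trans <| iUnion₂_mono fun _ _ =>
      modulusSet_mono (image_mono Iio_subset_Iic_self) le_rfl le_rfl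

theorem interior_modulusSet_subset_closure (h : StronglyBaire X)
    (hf₁ : ∀ k, Continuous fun x => f x k) (hf₂ : ∀ x, Continuous (f x)) (T : Set X)
    {τ ε : ℝ} (hτ : τ < ε / 2) :
    interior (modulusSet f T 0 τ) ⊆ closure (smallOscillationSet f ε) := by
  have := h.baireSpace
  obtain ⟨c, hc⟩ : ∃ c, #T = c := ⟨_, rfl⟩
  induction c using WellFoundedLT.induction generalizing T τ with
  | ind c ih =>
  rcases T.finite_or_infinite with hfin | hinf
  · simpa using interior_modulusSet_subset_closure_of_finset hf₁ hf₂ hfin.toFinset hτ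
  obtain ⟨g, hg⟩ := exists_image_Iio_ord_eq hinf.nonempty
  have hℵ₀ : ℵ₀ ≤ #T := Cardinal.infinite_iff.1 hinf.to_subtype
  obtain ⟨τ', hττ', hτ'⟩ := exists_between hτ
  rw [← hg]
  refine (h.interior_modulusSet_subset_closure_iUnion hf₁ hf₂
    (Cardinal.isSuccLimit_ord hℵ₀) g hττ').trans <| closure_minimal ?_ isClosed_closure
  exact iUnion₂_subset fun ξ hξ =>
    ih _ (hc ▸ mk_image_Iic_lt_of_lt_ord hℵ₀ g hξ) _ hτ' rfl

theorem dense_smallOscillationSet (h : StronglyBaire X)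
    (hf₁ : ∀ k, Continuous fun x => f x k) (hf₂ : ∀ x, Continuous (f x)) {ε : ℝ}
    (hε : 0 < ε) : Dense (smallOscillationSet f ε) := by
  have huniv : modulusSet f univ 0 0 = univ :=
    eq_univ_of_forall fun y k k' hkk' => by
      rw [abs_nonpos_iff.1 (hkk' y (mem_univ y)), abs_zero]
  have := h.interior_modulusSet_subset_closure hf₁ hf₂ univ (half_pos hε)
  rwa [huniv, interior_univ, univ_subset_iff, ← dense_iff_closure_eq] at this

end StronglyBaire

/-- Every strongly Baire space is a Namioka space. -/
theorem namioka_of_stronglyBaire (X : Type u) [TopologicalSpace X]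
    (h : StronglyBaire X) : NamiokaSpace X := by
  have hB := h.baireSpace
  refine ⟨hB, fun K _ _ f hf₁ hf₂ => ⟨⋂ n : ℕ, smallOscillationSet f (1 / (n + 1)),
    dense_iInter_of_isOpen (fun n => isOpen_smallOscillationSet f _)
      (fun n => h.dense_smallOscillationSet hf₁ hf₂ Nat.one_div_pos_of_nat),
    .iInter fun n => (isOpen_smallOscillationSet f _).isGδ,
    fun a ha => continuousAt_of_forall_mem_smallOscillationSet hf₂ fun ε hε => ?_⟩⟩
  obtain ⟨n, hn⟩ := exists_nat_one_div_lt hε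
  exact smallOscillationSet_mono hn.le (mem_iInter.1 ha n)
end
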